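/- arXiv:1404.3617 — 5 statements merged into one kernel-verified Lean document; each statement's English description precedes it below -/
import Mathlib

section
/- Let A be a unital C*-algebra with trivial center (its center equals ℂ·1_A), let k ≥ 2, and let α and β be automorphisms of A with αᵏ = id and βᵏ = id, regarded as actions of ℤ/kℤ on A via n ↦ αⁿ. Then the following are equivalent: (a) the ℤ/kℤ-actions n ↦ αⁿ and n ↦ βⁿ are cocycle conjugate; (b) the ℤ-actions n ↦ αⁿ and n ↦ βⁿ are cocycle conjugate. -/
noncomputable section

variable {A : Type*} [NormedRing A] [StarRing A] [CStarRing A] [CompleteSpace A]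
  [NormedAlgebra ℂ A] [StarModule ℂ A]

/-- The group of ⋆-algebra automorphisms of `A`, with `(α * β) a = α (β a)`. -/
instance : Group (A ≃⋆ₐ[ℂ] A) where
  mul e₁ e₂ := e₂.trans e₁
  one := StarAlgEquiv.refl ℂ A
  inv := StarAlgEquiv.symm
  mul_assoc _ _ _ := rfl
  one_mul _ := rfl
  mul_one _ := rfl
  inv_mul_cancel e := StarAlgEquiv.ext fun a => e.symm_apply_apply a

/-- `u` is an `α`-cocycle for the induced `ℤ`-action `n ↦ αⁿ`. -/
def IsZCocycle (α : A ≃⋆ₐ[ℂ] A) (u : ℤ → A) : Prop :=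
  (∀ n, u n ∈ unitary A) ∧ ∀ m n : ℤ, u (m + n) = u m * (α ^ m) (u n)

/-- The `ℤ`-actions generated by `α` and `β` are cocycle conjugate. -/
def ZCocycleConjugate (α β : A ≃⋆ₐ[ℂ] A) : Prop :=
  ∃ (u : ℤ → A) (γ : A ≃⋆ₐ[ℂ] A), IsZCocycle α u ∧
    ∀ (n : ℤ) (a : A), u n * (α ^ n) a * star (u n) = γ ((β ^ n) (γ.symm a))

/-- `u` is a cocycle for the `ℤ/kℤ`-action `n ↦ αⁿ` induced by an automorphism `α`
with `αᵏ = id`. -/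
def IsZModCocycle (k : ℕ) (α : A ≃⋆ₐ[ℂ] A) (u : ZMod k → A) : Prop :=
  (∀ g, u g ∈ unitary A) ∧ ∀ g h : ZMod k, u (g + h) = u g * (α ^ (g.val)) (u h)

/-- The `ℤ/kℤ`-actions induced by `α` and `β` (automorphisms of order dividing `k`)
are cocycle conjugate. -/
def ZModCocycleConjugate (k : ℕ) (α β : A ≃⋆ₐ[ℂ] A) : Prop :=
  ∃ (u : ZMod k → A) (γ : A ≃⋆ₐ[ℂ] A), IsZModCocycle k α u ∧
    ∀ (g : ZMod k) (a : A),
      u g * (α ^ (g.val)) a * star (u g) = γ ((β ^ (g.val)) (γ.symm a))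

/-!
From `ℤ/kℤ` to `ℤ`, compose the cocycle with `ℤ → ℤ/kℤ`. Conversely, let `u` be an `α`-cocycle
with `Ad(uₙ) ∘ αⁿ = γ ∘ βⁿ ∘ γ⁻¹`. Since `αᵏ = βᵏ = id`, `Ad(u_k)` is the identity, so `u_k` is a
central unitary, i.e. a scalar `λ` of modulus one. Multiplying `u` by the character `n ↦ μⁿ`,
where `μᵏ = λ⁻¹`, gives a cocycle implementing the same inner automorphisms with `u_k = 1`; the
cocycle identity `u_{n+k} = uₙ αⁿ(u_k)` then makes it `k`-periodic, so it descends to `ℤ/kℤ`.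
-/

theorem zpow_eq_pow_zmod_val {G : Type*} [Group G] {x : G} {k : ℕ} [NeZero k] (hx : x ^ k = 1)
    (n : ℤ) : x ^ n = x ^ (n : ZMod k).val := by
  rw [zpow_eq_zpow_emod' n hx, ← ZMod.val_intCast, zpow_natCast]

theorem Function.Periodic.eq_zmod_val {X : Type*} {f : ℤ → X} {k : ℕ} [NeZero k]
    (hf : Function.Periodic f k) (n : ℤ) : f n = f (n : ZMod k).val := by
  rw [ZMod.val_intCast, Int.emod_def, mul_comm]
  exact (hf.sub_int_mul_eq (n / k)).symm

theorem commute_of_forall_mul_mul_star_eq {R : Type*} [Monoid R] [StarMul R] {u : R}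
    (hu : u ∈ unitary R) (h : ∀ a, u * a * star u = a) (b : R) : Commute u b :=
  calc u * b = u * b * (star u * u) := by rw [Unitary.star_mul_self_of_mem hu, mul_one]
    _ = b * u := by rw [← mul_assoc, h]

theorem unitary_smul_mul_mul_star_smul {R : Type*} [Ring R] [StarRing R] [Algebra ℂ R]
    [StarModule ℂ R] (c : unitary ℂ) (u a : R) :
    ((c : ℂ) • u) * a * star ((c : ℂ) • u) = u * a * star u := by
  rw [star_smul, smul_mul_assoc, smul_mul_assoc, mul_smul_comm, smul_smul,
    Unitary.mul_star_self_of_mem c.prop, one_smul]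

theorem Complex.exists_unitary_pow_eq (c : unitary ℂ) {k : ℕ} (hk : k ≠ 0) :
    ∃ μ : unitary ℂ, μ ^ k = c := by
  obtain ⟨l, hl⟩ := IsAlgClosed.exists_pow_nat_eq (c : ℂ) (Nat.pos_of_ne_zero hk)
  have hnorm : ‖l‖ = 1 := by
    rw [← pow_eq_one_iff_of_nonneg (norm_nonneg l) hk, ← norm_pow, hl,
      CStarRing.norm_of_mem_unitary c.prop]
  have hmem : l ∈ unitary ℂ := by
    rw [Unitary.mem_iff_star_mul_self, Complex.star_def, Complex.conj_mul', hnorm]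
    norm_num
  exact ⟨⟨l, hmem⟩, Subtype.ext (by simpa using hl)⟩

theorem exists_unitary_smul_one_of_commute {R : Type*} [Ring R] [StarRing R] [Algebra ℂ R]
    [StarModule ℂ R] (hcenter : ∀ a : R, (∀ b : R, a * b = b * a) → ∃ c : ℂ, a = c • (1 : R))
    {u : R} (hu : u ∈ unitary R) (hcomm : ∀ b, Commute u b) :
    ∃ c : unitary ℂ, u = (c : ℂ) • (1 : R) := by
  rcases subsingleton_or_nontrivial R with hR | hR
  · exact ⟨1, Subsingleton.elim _ _⟩
  obtain ⟨c, rfl⟩ := hcenter u hcomm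
  refine ⟨⟨c, Unitary.mem_iff_star_mul_self.mpr ((algebraMap ℂ R).injective ?_)⟩, rfl⟩
  rw [map_mul, algebraMap_star_comm, Algebra.algebraMap_eq_smul_one, map_one]
  exact Unitary.star_mul_self_of_mem hu

section Cocycle

variable {B : Type*} [NormedRing B] [StarRing B] [NormedAlgebra ℂ B]

namespace IsZCocycle

variable {α : B ≃⋆ₐ[ℂ] B} {u : ℤ → B}

theorem zpow_smul [StarModule ℂ B] (hu : IsZCocycle α u) (μ : unitary ℂ) :
    IsZCocycle α fun n => ((μ ^ n : unitary ℂ) : ℂ) • u n := by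
  refine ⟨fun n => Unitary.smul_mem_of_mem (μ ^ n).prop (hu.1 n), fun m n => ?_⟩
  dsimp only
  rw [hu.2 m n, map_smul, smul_mul_smul_comm, zpow_add, Submonoid.coe_mul]

theorem periodic {k : ℕ} (hu : IsZCocycle α u) (hk : u k = 1) : Function.Periodic u k :=
  fun n => by rw [hu.2, hk, map_one, mul_one]

theorem isZModCocycle_comp_val {k : ℕ} [NeZero k] (hu : IsZCocycle α u) (hk : u k = 1) :
    IsZModCocycle k α fun g => u g.val := by
  refine ⟨fun g => hu.1 _, fun g h => ?_⟩
  rw [← zpow_natCast, ← hu.2, (hu.periodic hk).eq_zmod_val (_ + _)]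
  simp

end IsZCocycle

theorem ZModCocycleConjugate.zCocycleConjugate {k : ℕ} [NeZero k] {α β : B ≃⋆ₐ[ℂ] B}
    (hα : α ^ k = 1) (hβ : β ^ k = 1) (h : ZModCocycleConjugate k α β) :
    ZCocycleConjugate α β := by
  obtain ⟨v, γ, ⟨hv_unitary, hv⟩, hconj⟩ := h
  refine ⟨fun n : ℤ => v n, γ, ⟨fun n => hv_unitary n, fun m n => ?_⟩, fun n a => ?_⟩
  · dsimp only
    rw [Int.cast_add, hv, zpow_eq_pow_zmod_val hα m]
  · rw [zpow_eq_pow_zmod_val hα n, zpow_eq_pow_zmod_val hβ n]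
    exact hconj n a

theorem ZCocycleConjugate.zModCocycleConjugate [StarModule ℂ B] {k : ℕ} [NeZero k]
    (hcenter : ∀ a : B, (∀ b : B, a * b = b * a) → ∃ c : ℂ, a = c • (1 : B))
    {α β : B ≃⋆ₐ[ℂ] B} (hα : α ^ k = 1) (hβ : β ^ k = 1) (h : ZCocycleConjugate α β) :
    ZModCocycleConjugate k α β := by
  obtain ⟨u, γ, hu, hconj⟩ := h
  have hAd : ∀ a, u k * a * star (u k) = a := fun a => by
    simpa [hα, hβ] using hconj k a
  obtain ⟨c, hc⟩ := exists_unitary_smul_one_of_commute hcenter (hu.1 k)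
    (commute_of_forall_mul_mul_star_eq (hu.1 k) hAd)
  obtain ⟨μ, hμ⟩ := Complex.exists_unitary_pow_eq c⁻¹ (NeZero.ne k)
  let w := fun n : ℤ => ((μ ^ n : unitary ℂ) : ℂ) • u n
  have hwk : w k = 1 := by
    simp only [w, zpow_natCast, hμ, hc, smul_smul, ← Submonoid.coe_mul, inv_mul_cancel,
      Submonoid.coe_one, one_smul]
  refine ⟨fun g => w g.val, γ, (hu.zpow_smul μ).isZModCocycle_comp_val hwk, fun g a => ?_⟩
  simp only [w, unitary_smul_mul_mul_star_smul, ← zpow_natCast]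
  exact hconj g.val a

end Cocycle

theorem stmt1 (k : ℕ) (hk : 2 ≤ k)
    (hcenter : ∀ a : A, (∀ b : A, a * b = b * a) → ∃ c : ℂ, a = c • (1 : A))
    (α β : A ≃⋆ₐ[ℂ] A) (hα : α ^ k = 1) (hβ : β ^ k = 1) :
    ZModCocycleConjugate k α β ↔ ZCocycleConjugate α β := by
  have : NeZero k := ⟨by omega⟩
  exact ⟨ZModCocycleConjugate.zCocycleConjugate hα hβ,
    ZCocycleConjugate.zModCocycleConjugate hcenter hα hβ⟩
end
end

section
/- Let F be the free group on countably many generators x_n, n ∈ ℕ. Then the set S(F) of subsets of F that are subgroups of F is a Borel subset of 2^F, and there is a Borel function H ↦ B_H from S(F) to 2^F such that for every subgroup H of F, the set B_H is a free generating set of H: B_H ⊆ H, B_H generates H, and H is a free group with basis B_H (equivalently, the canonical homomorphism from the free group on B_H to H is an isomorphism). -/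
/-!
Order `FreeGroup α` shortlex on reduced words. The least elements of the left cosets of a
subgroup `H` form a Schreier transversal: deleting the first letter `ℓ` of the least
representative of `q` gives the least representative of `ℓ⁻¹ • q`, since prepending `ℓ` to
anything smaller would give something smaller than the original representative. For such a
transversal the nontrivial elements `(cosetRep (of a • q))⁻¹ * of a * cosetRep q` generate `H`,
and the Reidemeister–Schreier rewriting (a cocycle of the coset action with values in the free
group on these elements) inverts the inclusion on `H`, so they are a free basis.

The construction only takes least elements of translates `g • H`, and the minimum of a set of
a countable well-ordered type depends measurably on the set; hence `H ↦ basis` is Borel.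
-/

open scoped Pointwise

theorem measurableSet_range_coe_subgroup {G : Type*} [Group G] [Countable G] :
    MeasurableSet (Set.range ((↑) : Subgroup G → Set G)) := by
  have h : Set.range ((↑) : Subgroup G → Set G) =
      {S | 1 ∈ S ∧ ∀ x ∈ S, ∀ y ∈ S, x * y⁻¹ ∈ S} := by
    ext S
    constructor
    · rintro ⟨H, rfl⟩
      exact ⟨H.one_mem, fun x hx y hy => H.mul_mem hx (H.inv_mem hy)⟩
    · rintro ⟨h1, hdiv⟩
      exact ⟨Subgroup.ofDiv S ⟨1, h1⟩ hdiv, rfl⟩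
  rw [h]
  exact measurableSet_setOfPred.2 (by fun_prop)

theorem measurable_setOf_eq_true {β : Type*} :
    Measurable fun f : β → Bool => {x | f x = true} :=
  measurable_set_iff.2 fun x => by
    simpa only [Set.mem_ofPred_eq] using
      (measurable_pi_apply x).eq_const (f := fun f : β → Bool => f x) true

theorem measurable_smul_set {G : Type*} [Group G] (g : G) :
    Measurable fun S : Set G => g • S :=
  measurable_set_iff.2 fun u => by
    simpa only [Set.mem_smul_set_iff_inv_smul_mem] using measurable_set_mem _

theorem QuotientGroup.smul_mk_one_of_mem {G : Type*} [Group G] {H : Subgroup G} {h : G}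
    (hh : h ∈ H) : h • ((1 : G) : G ⧸ H) = ((1 : G) : G ⧸ H) := by
  rwa [← MulAction.mem_stabilizer_iff, MulAction.stabilizer_quotient]

namespace FreeGroup

theorem toWord_mk_of_toWord_eq_cons {α : Type*} [DecidableEq α] {w : FreeGroup α} {a : α × Bool}
    {t : List (α × Bool)} (hw : w.toWord = a :: t) : (mk t).toWord = t := by
  rw [toWord_mk, IsReduced.reduce_eq]
  exact isReduced_toWord.infix (hw ▸ List.suffix_cons a t).isInfix

variable {α : Type*} [LinearOrder α]

def ShortlexLT (x y : FreeGroup α) : Prop :=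
  List.Shortlex (Prod.Lex (· < ·) (· < ·)) x.toWord y.toWord

local infix:50 " ≺ " => ShortlexLT

theorem eq_of_not_shortlexLT {x y : FreeGroup α} (hxy : ¬ x ≺ y) (hyx : ¬ y ≺ x) : x = y :=
  toWord_injective (Std.Trichotomous.trichotomous _ _ hxy hyx)

theorem not_shortlexLT_one (x : FreeGroup α) : ¬ x ≺ 1 := by
  simp [ShortlexLT]

theorem wellFounded_shortlexLT [WellFoundedLT α] : WellFounded (ShortlexLT (α := α)) :=
  InvImage.wf toWord (List.Shortlex.wf (WellFounded.prod_lex wellFounded_lt wellFounded_lt))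

theorem mk_cons_mul_shortlexLT {w v : FreeGroup α} {a : α × Bool} {t : List (α × Bool)}
    (hw : w.toWord = a :: t) (hv : v ≺ mk t) : mk [a] * v ≺ w := by
  have ht := toWord_mk_of_toWord_eq_cons hw
  have hsub : List.Sublist (mk [a] * v).toWord (a :: v.toWord) := by
    simpa [toWord_mk] using toWord_mul_sublist (mk [a]) v
  rw [ShortlexLT, ht] at hv
  rw [ShortlexLT, hw]
  by_cases heq : (mk [a] * v).toWord = a :: v.toWord
  · rw [heq]
    exact hv.cons
  · have hlen : (mk [a] * v).toWord.length < v.toWord.length + 1 :=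
      lt_of_le_of_ne hsub.length_le (fun h => heq (hsub.eq_of_length h))
    have hvt : v.toWord.length ≤ t.length := by
      rcases List.shortlex_def.1 hv with h | h
      · exact h.le
      · exact h.1.le
    exact List.Shortlex.of_length_lt (by simp only [List.length_cons]; omega)

section shortlexMin

variable [WellFoundedLT α]

open Classical in
noncomputable def shortlexMin (A : Set (FreeGroup α)) : FreeGroup α :=
  if h : A.Nonempty then wellFounded_shortlexLT.min A h else 1

theorem shortlexMin_mem {A : Set (FreeGroup α)} (h : A.Nonempty) : shortlexMin A ∈ A := by
  rw [shortlexMin, dif_pos h]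
  exact WellFounded.min_mem _ _ _

theorem not_shortlexLT_shortlexMin {A : Set (FreeGroup α)} {x : FreeGroup α} (hx : x ∈ A) :
    ¬ x ≺ shortlexMin A := by
  rw [shortlexMin, dif_pos ⟨x, hx⟩]
  exact wellFounded_shortlexLT.not_lt_min A hx

theorem shortlexMin_eq_iff {A : Set (FreeGroup α)} {u : FreeGroup α} :
    shortlexMin A = u ↔ (u ∈ A ∧ ∀ v, v ≺ u → v ∉ A) ∨ (u = 1 ∧ ∀ v, v ∉ A) := by
  constructor
  · rintro rfl
    by_cases h : A.Nonempty
    · exact Or.inl ⟨shortlexMin_mem h, fun v hv hvA => not_shortlexLT_shortlexMin hvA hv⟩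
    · rw [shortlexMin, dif_neg h]
      exact Or.inr ⟨rfl, fun v hv => h ⟨v, hv⟩⟩
  · rintro (⟨hu, hmin⟩ | ⟨rfl, hA⟩)
    · exact eq_of_not_shortlexLT (fun h => hmin _ h (shortlexMin_mem ⟨u, hu⟩))
        (not_shortlexLT_shortlexMin hu)
    · rw [shortlexMin, dif_neg (fun ⟨v, hv⟩ => hA v hv)]

theorem measurable_shortlexMin_eq [Countable α] (u : FreeGroup α) :
    Measurable fun A : Set (FreeGroup α) => shortlexMin A = u := by
  simp_rw [shortlexMin_eq_iff]
  fun_prop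

end shortlexMin

section Schreier

variable [WellFoundedLT α] (H : Subgroup (FreeGroup α))

noncomputable def cosetRep (q : FreeGroup α ⧸ H) : FreeGroup α :=
  shortlexMin {u : FreeGroup α | (u : FreeGroup α ⧸ H) = q}

theorem mk_cosetRep (q : FreeGroup α ⧸ H) : (cosetRep H q : FreeGroup α ⧸ H) = q :=
  shortlexMin_mem (A := {u : FreeGroup α | (u : FreeGroup α ⧸ H) = q}) ⟨q.out, q.out_eq'⟩

variable {H} in
theorem cosetRep_eq {q : FreeGroup α ⧸ H} {v : FreeGroup α} (hv : (v : FreeGroup α ⧸ H) = q)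
    (hmin : ∀ u : FreeGroup α, (u : FreeGroup α ⧸ H) = q → ¬ u ≺ v) : cosetRep H q = v :=
  eq_of_not_shortlexLT (hmin _ (mk_cosetRep H q)) (not_shortlexLT_shortlexMin hv)

theorem cosetRep_one : cosetRep H ((1 : FreeGroup α) : FreeGroup α ⧸ H) = 1 :=
  cosetRep_eq rfl fun u _ => not_shortlexLT_one u

variable {H} in
theorem cosetRep_smul_eq_mk_tail {q : FreeGroup α ⧸ H} {a : α × Bool} {t : List (α × Bool)}
    (h : (cosetRep H q).toWord = a :: t) : cosetRep H ((mk [a])⁻¹ • q) = mk t := by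
  have hrep : cosetRep H q = mk [a] * mk t := by
    rw [mul_mk, List.singleton_append, ← h, mk_toWord]
  have hmk : ∀ u : FreeGroup α, (u : FreeGroup α ⧸ H) = (mk [a])⁻¹ • q ↔
      ((mk [a] * u : FreeGroup α) : FreeGroup α ⧸ H) = q := by
    intro u
    rw [eq_inv_smul_iff, MulAction.Quotient.smul_mk, smul_eq_mul]
  refine cosetRep_eq ((hmk _).2 (hrep ▸ mk_cosetRep H q)) fun u hu hut => ?_
  exact not_shortlexLT_shortlexMin ((hmk u).1 hu) (mk_cons_mul_shortlexLT h hut)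

noncomputable def schreierElement (g : FreeGroup α) (q : FreeGroup α ⧸ H) : FreeGroup α :=
  (cosetRep H (g • q))⁻¹ * g * cosetRep H q

theorem schreierElement_mem (g : FreeGroup α) (q : FreeGroup α ⧸ H) :
    schreierElement H g q ∈ H := by
  have h : ((g * cosetRep H q : FreeGroup α) : FreeGroup α ⧸ H) = cosetRep H (g • q) := by
    rw [mk_cosetRep, ← smul_eq_mul, ← MulAction.Quotient.smul_mk, mk_cosetRep]
  simpa [schreierElement, mul_assoc] using QuotientGroup.eq.1 h.symm

theorem schreierElement_mul (g h : FreeGroup α) (q : FreeGroup α ⧸ H) :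
    schreierElement H (g * h) q = schreierElement H g (h • q) * schreierElement H h q := by
  simp only [schreierElement, mul_smul]
  group

theorem schreierElement_inv (g : FreeGroup α) (q : FreeGroup α ⧸ H) :
    schreierElement H g⁻¹ q = (schreierElement H g (g⁻¹ • q))⁻¹ := by
  simp only [schreierElement, smul_inv_smul]
  group

theorem schreierElement_one_of_mem {h : FreeGroup α} (hh : h ∈ H) :
    schreierElement H h ((1 : FreeGroup α) : FreeGroup α ⧸ H) = h := by
  simp [schreierElement, QuotientGroup.smul_mk_one_of_mem hh, cosetRep_one]

/-- Defined for every set `S`, so that it can be evaluated at every point of `2^F`; for a subgroup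
it is the set of nontrivial Schreier generators (`mem_schreierSet_iff`). -/
noncomputable def schreierSet (S : Set (FreeGroup α)) : Set (FreeGroup α) :=
  {x | x ≠ 1 ∧ ∃ (g : FreeGroup α) (a : α),
    x = (shortlexMin ((of a * g) • S))⁻¹ * of a * shortlexMin (g • S)}

theorem shortlexMin_smul_coe (g : FreeGroup α) :
    shortlexMin (g • (H : Set (FreeGroup α))) = cosetRep H g := by
  rw [cosetRep]
  congr 1
  ext u
  rw [Set.mem_smul_set_iff_inv_smul_mem, smul_eq_mul, SetLike.mem_coe, Set.mem_ofPred_eq,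
    eq_comm, QuotientGroup.eq]

theorem mem_schreierSet_iff {x : FreeGroup α} :
    x ∈ schreierSet H ↔
      x ≠ 1 ∧ ∃ (q : FreeGroup α ⧸ H) (a : α), x = schreierElement H (of a) q := by
  simp only [schreierSet, Set.mem_ofPred_eq, shortlexMin_smul_coe, schreierElement,
    QuotientGroup.mk_surjective.exists, MulAction.Quotient.smul_mk, smul_eq_mul]

theorem schreierSet_subset : schreierSet H ⊆ (H : Set (FreeGroup α)) := by
  rintro x hx
  obtain ⟨-, q, a, rfl⟩ := (mem_schreierSet_iff H).1 hx
  exact schreierElement_mem H _ _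

theorem schreierElement_mem_closure (g : FreeGroup α) (q : FreeGroup α ⧸ H) :
    schreierElement H g q ∈ Subgroup.closure (schreierSet H) := by
  induction g using FreeGroup.induction_on generalizing q with
  | C1 => simp [schreierElement]
  | of a =>
    by_cases h1 : schreierElement H (of a) q = 1
    · rw [h1]
      exact one_mem _
    · exact Subgroup.subset_closure ((mem_schreierSet_iff H).2 ⟨h1, q, a, rfl⟩)
  | inv_of a ih =>
    rw [schreierElement_inv]
    exact inv_mem (ih _)
  | mul g h ihg ihh =>
    rw [schreierElement_mul]
    exact mul_mem (ihg _) (ihh _)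

theorem closure_schreierSet : Subgroup.closure (schreierSet H) = H := by
  refine le_antisymm ((Subgroup.closure_le H).2 (schreierSet_subset H)) fun h hh => ?_
  rw [← schreierElement_one_of_mem H hh]
  exact schreierElement_mem_closure H h _

open Classical in
noncomputable def toSchreierBasis (x : FreeGroup α) :
    FreeGroup (schreierSet (H : Set (FreeGroup α))) :=
  if hx : x ∈ schreierSet H then of ⟨x, hx⟩ else 1

theorem toSchreierBasis_one : toSchreierBasis H 1 = 1 :=
  dif_neg fun hx => hx.1 rfl

/-- The Reidemeister–Schreier rewriting: its left component `schreierRewrite` is a cocycle for the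
action on cosets, and the semidirect product makes the cocycle identity come from `map_mul`. -/
noncomputable def schreierRewriting :
    FreeGroup α →* ((FreeGroup α ⧸ H) → FreeGroup (schreierSet (H : Set (FreeGroup α))))
      ⋊[mulAutArrow] FreeGroup α :=
  FreeGroup.lift fun a =>
    ⟨fun q => toSchreierBasis H (schreierElement H (of a) ((of a)⁻¹ • q)), of a⟩

noncomputable def schreierRewrite (g : FreeGroup α) (q : FreeGroup α ⧸ H) :
    FreeGroup (schreierSet (H : Set (FreeGroup α))) :=
  (schreierRewriting H g).left q

theorem schreierRewriting_right (g : FreeGroup α) : (schreierRewriting H g).right = g := by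
  have h : SemidirectProduct.rightHom.comp (schreierRewriting H) = MonoidHom.id _ :=
    ext_hom _ _ fun a => by simp [schreierRewriting]
  exact DFunLike.congr_fun h g

theorem schreierRewrite_one (q : FreeGroup α ⧸ H) : schreierRewrite H 1 q = 1 := by
  simp [schreierRewrite]

theorem schreierRewrite_of (a : α) (q : FreeGroup α ⧸ H) :
    schreierRewrite H (of a) q = toSchreierBasis H (schreierElement H (of a) ((of a)⁻¹ • q)) := by
  simp [schreierRewrite, schreierRewriting]

theorem schreierRewrite_mul (g h : FreeGroup α) (q : FreeGroup α ⧸ H) :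
    schreierRewrite H (g * h) q = schreierRewrite H g q * schreierRewrite H h (g⁻¹ • q) := by
  rw [schreierRewrite, _root_.map_mul, SemidirectProduct.mul_left, schreierRewriting_right]
  rfl

theorem schreierRewrite_inv (g : FreeGroup α) (q : FreeGroup α ⧸ H) :
    schreierRewrite H g⁻¹ q = (schreierRewrite H g (g • q))⁻¹ := by
  have h := schreierRewrite_mul H g⁻¹ g q
  rw [inv_mul_cancel, schreierRewrite_one, inv_inv] at h
  exact eq_inv_of_mul_eq_one_left h.symm

theorem schreierRewrite_letter_eq_one {a : α × Bool} {q : FreeGroup α ⧸ H}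
    (h : cosetRep H q = mk [a] * cosetRep H ((mk [a])⁻¹ • q)) :
    schreierRewrite H (mk [a]) q = 1 := by
  have hγ : schreierElement H (mk [a]) ((mk [a])⁻¹ • q) = 1 := by
    rw [schreierElement, smul_inv_smul, h]
    group
  obtain ⟨x, _ | _⟩ := a
  · have hx : mk [(x, false)] = (of x)⁻¹ := by rw [of, inv_mk]; rfl
    rw [hx, inv_inv, ← inv_inv (of x), schreierElement_inv, inv_inv, inv_smul_smul,
      inv_eq_one] at hγ
    rw [hx, schreierRewrite_inv, schreierRewrite_of, inv_smul_smul, hγ, toSchreierBasis_one,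
      inv_one]
  · change schreierRewrite H (of x) q = 1
    rw [schreierRewrite_of]
    exact (congrArg _ hγ).trans (toSchreierBasis_one H)

theorem schreierRewrite_cosetRep (q : FreeGroup α ⧸ H) :
    schreierRewrite H (cosetRep H q) q = 1 := by
  induction hw : (cosetRep H q).toWord generalizing q with
  | nil => rw [toWord_eq_nil_iff.1 hw, schreierRewrite_one]
  | cons a t ih =>
    have htail := cosetRep_smul_eq_mk_tail hw
    have hrep : cosetRep H q = mk [a] * cosetRep H ((mk [a])⁻¹ • q) := by
      rw [htail, mul_mk, List.singleton_append, ← hw, mk_toWord]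
    rw [hrep, schreierRewrite_mul, schreierRewrite_letter_eq_one H hrep,
      ih _ (htail ▸ toWord_mk_of_toWord_eq_cons hw), mul_one]

theorem schreierRewrite_of_mem_schreierSet {x : FreeGroup α} (hx : x ∈ schreierSet H) :
    schreierRewrite H x ((1 : FreeGroup α) : FreeGroup α ⧸ H) = of ⟨x, hx⟩ := by
  obtain ⟨-, q, a, hxq⟩ := (mem_schreierSet_iff H).1 hx
  have hγ : x = (cosetRep H (of a • q))⁻¹ * (of a * cosetRep H q) := by
    rw [hxq, schreierElement, mul_assoc]
  have hrep : ∀ q' : FreeGroup α ⧸ H, cosetRep H q' • ((1 : FreeGroup α) : FreeGroup α ⧸ H) = q' :=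
    fun q' => by rw [MulAction.Quotient.smul_mk, smul_eq_mul, mul_one, mk_cosetRep]
  conv_lhs => rw [hγ]
  rw [schreierRewrite_mul, schreierRewrite_mul, schreierRewrite_inv, inv_inv, hrep,
    schreierRewrite_cosetRep, inv_one, one_mul, inv_smul_smul, schreierRewrite_cosetRep, mul_one,
    schreierRewrite_of, inv_smul_smul, ← hxq, toSchreierBasis, dif_pos hx]

noncomputable def schreierRewriteHom : H →* FreeGroup (schreierSet (H : Set (FreeGroup α))) where
  toFun h := schreierRewrite H h ((1 : FreeGroup α) : FreeGroup α ⧸ H)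
  map_one' := schreierRewrite_one H _
  map_mul' h₁ h₂ := by
    rw [Subgroup.coe_mul, schreierRewrite_mul,
      QuotientGroup.smul_mk_one_of_mem (inv_mem h₁.2)]

theorem lift_schreierSet_injective :
    Function.Injective
      (FreeGroup.lift fun y : schreierSet (H : Set (FreeGroup α)) => (y : FreeGroup α)) := by
  let ι : FreeGroup (schreierSet (H : Set (FreeGroup α))) →* H :=
    FreeGroup.lift fun y => ⟨y, schreierSet_subset H y.2⟩
  have hleft : (schreierRewriteHom H).comp ι = MonoidHom.id _ :=
    ext_hom _ _ fun y => by
      simpa [ι, schreierRewriteHom] using schreierRewrite_of_mem_schreierSet H y.2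
  have hlift : FreeGroup.lift (fun y : schreierSet (H : Set (FreeGroup α)) => (y : FreeGroup α)) =
      H.subtype.comp ι := ext_hom _ _ fun y => rfl
  rw [hlift]
  exact Subtype.val_injective.comp (Function.LeftInverse.injective (g := schreierRewriteHom H)
    fun w => DFunLike.congr_fun hleft w)

end Schreier

section Borel

variable [WellFoundedLT α] [Countable α]

theorem measurable_schreierSet : Measurable (schreierSet (α := α)) := by
  have hmin (g u : FreeGroup α) : Measurable fun S : Set (FreeGroup α) => shortlexMin (g • S) = u :=
    (measurable_shortlexMin_eq u).comp (measurable_smul_set g)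
  refine measurable_set_iff.2 fun x => ?_
  have h : (fun S => x ∈ schreierSet S) = fun S => x ≠ 1 ∧
      ∃ (g : FreeGroup α) (a : α) (u v : FreeGroup α),
        shortlexMin ((of a * g) • S) = u ∧ shortlexMin (g • S) = v ∧ x = u⁻¹ * of a * v := by
    ext S
    simp [schreierSet]
  rw [h]
  fun_prop

end Borel

end FreeGroup

/-- **Borel version of the Nielsen–Schreier theorem.**
Identify subsets of the free group `F = FreeGroup ℕ` on countably many generators with
elements of `2^F = F → Bool` (with the product σ-algebra, which is the Borel σ-algebra of
the Cantor space `2^F`). The set `S(F)` of (characteristic functions of) subgroups of `F`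
is Borel, and there is a Borel map `f ↦ b f` assigning to (the characteristic function of)
each subgroup `H` of `F` a subset `B_H = {x | b f x = true}` which is a free generating
set of `H`: it is contained in `H`, it generates `H`, and the canonical homomorphism from
the free group on `B_H` to `F` (hence onto `H`) is injective, so that `H` is free with
basis `B_H`. -/
theorem stmt3 :
    MeasurableSet {f : FreeGroup ℕ → Bool |
        ∃ H : Subgroup (FreeGroup ℕ), ∀ x, f x = true ↔ x ∈ H} ∧
      ∃ b : (FreeGroup ℕ → Bool) → (FreeGroup ℕ → Bool), Measurable b ∧
        ∀ (f : FreeGroup ℕ → Bool) (H : Subgroup (FreeGroup ℕ)),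
          (∀ x, f x = true ↔ x ∈ H) →
            (∀ x, b f x = true → x ∈ H) ∧
            Subgroup.closure {x | b f x = true} = H ∧
            Function.Injective
              (FreeGroup.lift (fun y : {x // b f x = true} => (y : FreeGroup ℕ))) := by
  classical
  have hset := measurable_setOf_eq_true (β := FreeGroup ℕ)
  refine ⟨?_, fun f x => decide (x ∈ FreeGroup.schreierSet {y | f y = true}), ?_, fun f H hf => ?_⟩
  · convert measurableSet_range_coe_subgroup.preimage hset using 1
    ext f
    simp only [Set.mem_ofPred_eq, Set.mem_preimage, Set.mem_range, Set.ext_iff, SetLike.mem_coe]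
    exact exists_congr fun H => forall_congr' fun x => Iff.comm
  · exact measurable_pi_lambda _ fun x =>
      (Measurable.of_discrete (f := fun p : Prop => decide p)).comp
        ((measurable_set_mem x).comp (FreeGroup.measurable_schreierSet.comp hset))
  · have hb : (fun x => decide (x ∈ FreeGroup.schreierSet {y | f y = true}) = true) =
        (· ∈ FreeGroup.schreierSet (H : Set (FreeGroup ℕ))) := by
      rw [show {y | f y = true} = (H : Set (FreeGroup ℕ)) from Set.ext hf]
      simp
    rw [hb]
    exact ⟨fun x hx => FreeGroup.schreierSet_subset H (congrFun hb x ▸ hx),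
      FreeGroup.closure_schreierSet H,
      FreeGroup.lift_schreierSet_injective H⟩
end

section
/- Let End_𝒢 be the set of pairs (G, α) ∈ 𝒢 × ℕ^ℕ such that α is an injective endomorphism of the group coded by G, and let DLim_𝒢 be the set of pairs (G, α) ∈ End_𝒢 such that the direct limit G_∞ of the inductive sequence G →α G →α G →α ⋯ is infinite. Then DLim_𝒢 is a Borel subset of End_𝒢, and there is a Borel map from DLim_𝒢 to End_𝒢 sending (G, α) to a pair (G', α') such that α' is an automorphism of the group coded by G' and there is a group isomorphism θ from G_∞ onto the group coded by G' satisfying θ ∘ α_∞ = α' ∘ θ, where α_∞ is the unique automorphism of G_∞ satisfying α_∞ ∘ φ_{n+1} = φ_n for all n ∈ ℕ, with φ_n : G → G_∞ the canonical map from the n-th stage of the inductive system into the limit. -/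
/-- `f : ℕ × ℕ → ℕ` codes a group structure on `ℕ` with multiplication
`a · b = f (a, b)`. -/
def IsGroupCode (f : ℕ × ℕ → ℕ) : Prop :=
  (∀ a b c, f (f (a, b), c) = f (a, f (b, c))) ∧
    ∃ e, (∀ a, f (e, a) = a ∧ f (a, e) = a) ∧ ∀ a, ∃ b, f (a, b) = e ∧ f (b, a) = e

/-- `φ` is a homomorphism from the group coded by `f` to the group coded by `g`. -/
def IsHomCode (f g : ℕ × ℕ → ℕ) (φ : ℕ → ℕ) : Prop :=
  ∀ a b, φ (f (a, b)) = g (φ a, φ b)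

/-- The standard Borel space `End_𝒢` of pairs `(G, α)` where `G` codes a group on `ℕ` and
`α` is an injective endomorphism of that group. -/
def EndCode : Set ((ℕ × ℕ → ℕ) × (ℕ → ℕ)) :=
  {x | IsGroupCode x.1 ∧ IsHomCode x.1 x.1 x.2 ∧ Function.Injective x.2}

/-- The equivalence relation on `G × ℕ` (pairs (element, stage)) whose quotient is the
direct limit of `G →α G →α G →α ⋯` : `(x, i) ∼ (y, j)` iff the images of `x` and `y` agree
at some later stage `k`. -/
def limRel (α : ℕ → ℕ) (p q : ℕ × ℕ) : Prop :=
  ∃ k, p.2 ≤ k ∧ q.2 ≤ k ∧ α^[k - p.2] p.1 = α^[k - q.2] q.1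

/-- The set `DLim_𝒢` of pairs `(G, α) ∈ End_𝒢` whose direct limit `G_∞` is infinite. -/
def DLimCode : Set ((ℕ × ℕ → ℕ) × (ℕ → ℕ)) :=
  {x | x ∈ EndCode ∧ Infinite (Quot (limRel x.2))}

noncomputable section Stmt4Aux
open scoped Classical

abbrev X4 := (ℕ × ℕ → ℕ) × (ℕ → ℕ)

def canon4 (x : X4) (p : ℕ × ℕ) : ℕ := sInf {n | limRel x.2 (Nat.unpair n) p}
def S4 (x : X4) (n : ℕ) : Prop := canon4 x (Nat.unpair n) = n
def iota4 (x : X4) (p : ℕ × ℕ) : ℕ := Nat.count (S4 x) (canon4 x p)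
def rep4 (x : X4) (m : ℕ) : ℕ × ℕ := Nat.unpair (Nat.nth (S4 x) m)
def mulP4 (x : X4) (p q : ℕ × ℕ) : ℕ × ℕ :=
  (x.1 (x.2^[max p.2 q.2 - p.2] p.1, x.2^[max p.2 q.2 - q.2] q.1), max p.2 q.2)
def shiftP4 (x : X4) (p : ℕ × ℕ) : ℕ × ℕ := (x.2 p.1, p.2)
def F4 (x : X4) : X4 :=
  (fun mn => iota4 x (mulP4 x (rep4 x mn.1) (rep4 x mn.2)),
   fun m => iota4 x (shiftP4 x (rep4 x m)))

variable {α : ℕ → ℕ} {x : X4} {p q r : ℕ × ℕ}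

theorem limRel_refl (α : ℕ → ℕ) (p : ℕ × ℕ) : limRel α p p := ⟨p.2, le_rfl, le_rfl, rfl⟩

theorem limRel_symm (h : limRel α p q) : limRel α q p := by
  obtain ⟨k, h1, h2, h3⟩ := h; exact ⟨k, h2, h1, h3.symm⟩

theorem raise4 (α : ℕ → ℕ) {i k K : ℕ} (h1 : i ≤ k) (h2 : k ≤ K) (a : ℕ) :
    α^[K - i] a = α^[K - k] (α^[k - i] a) := by
  rw [← Function.iterate_add_apply]; congr 1; omega

theorem limRel_trans (h1 : limRel α p q) (h2 : limRel α q r) : limRel α p r := by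
  obtain ⟨k, hpk, hqk, e1⟩ := h1
  obtain ⟨l, hql, hrl, e2⟩ := h2
  refine ⟨max k l, le_trans hpk (le_max_left ..), le_trans hrl (le_max_right ..), ?_⟩
  have E1 := congrArg (α^[max k l - k]) e1
  have E2 := congrArg (α^[max k l - l]) e2
  rw [← raise4 α hpk (le_max_left ..), ← raise4 α hqk (le_max_left ..)] at E1
  rw [← raise4 α hql (le_max_right ..), ← raise4 α hrl (le_max_right ..)] at E2
  exact E1.trans E2

theorem limRel_equiv (α : ℕ → ℕ) : Equivalence (limRel α) :=
  ⟨limRel_refl α, limRel_symm, limRel_trans⟩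

theorem canon4_spec (x : X4) (p : ℕ × ℕ) : limRel x.2 (Nat.unpair (canon4 x p)) p := by
  have h : Nat.pair p.1 p.2 ∈ {n | limRel x.2 (Nat.unpair n) p} := by
    simp only [Set.mem_setOf_eq, Nat.unpair_pair]
    exact limRel_refl x.2 p
  exact Nat.sInf_mem ⟨_, h⟩

theorem canon4_congr (h : limRel x.2 p q) : canon4 x p = canon4 x q := by
  unfold canon4; congr 1; ext n
  exact ⟨fun h' => limRel_trans h' h, fun h' => limRel_trans h' (limRel_symm h)⟩

theorem canon4_inj (h : canon4 x p = canon4 x q) : limRel x.2 p q :=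
  limRel_trans (limRel_symm (canon4_spec x p)) (h ▸ canon4_spec x q)

theorem S4_canon (x : X4) (p : ℕ × ℕ) : S4 x (canon4 x p) :=
  canon4_congr (canon4_spec x p)

theorem nth_iota4 (x : X4) (p : ℕ × ℕ) : Nat.nth (S4 x) (iota4 x p) = canon4 x p :=
  Nat.nth_count (S4_canon x p)

theorem iota4_congr (h : limRel x.2 p q) : iota4 x p = iota4 x q := by
  unfold iota4; rw [canon4_congr h]

theorem iota4_inj (h : iota4 x p = iota4 x q) : limRel x.2 p q :=
  canon4_inj (by rw [← nth_iota4 x p, ← nth_iota4 x q, h])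

theorem iota4_eq_iff : iota4 x p = iota4 x q ↔ limRel x.2 p q :=
  ⟨iota4_inj, iota4_congr⟩

theorem rep4_iota4 (x : X4) (p : ℕ × ℕ) : limRel x.2 (rep4 x (iota4 x p)) p := by
  rw [rep4, nth_iota4]; exact canon4_spec x p

theorem iota4_rep4 (hinf : (setOf (S4 x)).Infinite) (m : ℕ) : iota4 x (rep4 x m) = m := by
  unfold iota4 rep4
  have h1 : S4 x (Nat.nth (S4 x) m) := Nat.nth_mem_of_infinite hinf m
  rw [show canon4 x (Nat.unpair (Nat.nth (S4 x) m)) = Nat.nth (S4 x) m from h1,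
    Nat.count_nth_of_infinite hinf]

def e4 (x : X4) : ℕ := sInf {e | ∀ a, x.1 (e, a) = a ∧ x.1 (a, e) = a}

variable {p' q' : ℕ × ℕ}

section GroupLemmas

theorem e4_spec (hG : IsGroupCode x.1) : ∀ a, x.1 (e4 x, a) = a ∧ x.1 (a, e4 x) = a := by
  obtain ⟨-, e, he, -⟩ := hG
  exact Nat.sInf_mem (⟨e, he⟩ : Set.Nonempty {e | ∀ a, x.1 (e, a) = a ∧ x.1 (a, e) = a})

theorem exists_inv4 (hG : IsGroupCode x.1) (a : ℕ) : ∃ b, x.1 (a, b) = e4 x ∧ x.1 (b, a) = e4 x := by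
  obtain ⟨e, he, hi⟩ := hG.2
  have h1 : e4 x = e := by
    have h2 := (e4_spec hG e).1
    have h3 := (he (e4 x)).2
    rw [h3] at h2; exact h2
  rw [h1]; exact hi a

theorem iter_hom4 (hH : IsHomCode x.1 x.1 x.2) (k a b : ℕ) : x.2^[k] (x.1 (a, b)) = x.1 (x.2^[k] a, x.2^[k] b) := by
  induction k with
  | zero => simp
  | succ k ih => rw [Function.iterate_succ_apply', ih, hH, Function.iterate_succ_apply',
      Function.iterate_succ_apply']

theorem alpha_e4 (hG : IsGroupCode x.1) (hH : IsHomCode x.1 x.1 x.2) : x.2 (e4 x) = e4 x := by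
  have he := e4_spec hG
  have h1 : x.1 (x.2 (e4 x), x.2 (e4 x)) = x.2 (e4 x) := by
    rw [← hH, (he (e4 x)).1]
  obtain ⟨b, hb1, hb2⟩ := exists_inv4 hG (x.2 (e4 x))
  calc x.2 (e4 x) = x.1 (x.2 (e4 x), e4 x) := ((he _).2).symm
    _ = x.1 (x.2 (e4 x), x.1 (x.2 (e4 x), b)) := by rw [hb1]
    _ = x.1 (x.1 (x.2 (e4 x), x.2 (e4 x)), b) := (hG.1 _ _ _).symm
    _ = x.1 (x.2 (e4 x), b) := by rw [h1]
    _ = e4 x := hb1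

theorem iter_e4 (hG : IsGroupCode x.1) (hH : IsHomCode x.1 x.1 x.2) (k : ℕ) : x.2^[k] (e4 x) = e4 x := by
  induction k with
  | zero => rfl
  | succ k ih => rw [Function.iterate_succ_apply', ih, alpha_e4 hG hH]

theorem mulP4_fst (hH : IsHomCode x.1 x.1 x.2) {K : ℕ} (hK : max p.2 q.2 ≤ K) :
    x.2^[K - max p.2 q.2] ((mulP4 x p q).1) = x.1 (x.2^[K - p.2] p.1, x.2^[K - q.2] q.1) := by
  show x.2^[K - max p.2 q.2] (x.1 _) = _
  rw [iter_hom4 hH, ← raise4 x.2 (le_max_left p.2 q.2) hK, ← raise4 x.2 (le_max_right p.2 q.2) hK]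

theorem mulP4_congr (hH : IsHomCode x.1 x.1 x.2) (h1 : limRel x.2 p p') (h2 : limRel x.2 q q') :
    limRel x.2 (mulP4 x p q) (mulP4 x p' q') := by
  obtain ⟨k, hpk, hp'k, e1⟩ := h1
  obtain ⟨l, hql, hq'l, e2⟩ := h2
  set K := max k l with hKdef
  have hpK : p.2 ≤ K := le_trans hpk (le_max_left ..)
  have hqK : q.2 ≤ K := le_trans hql (le_max_right ..)
  have hp'K : p'.2 ≤ K := le_trans hp'k (le_max_left ..)
  have hq'K : q'.2 ≤ K := le_trans hq'l (le_max_right ..)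
  refine ⟨K, max_le hpK hqK, max_le hp'K hq'K, ?_⟩
  rw [show (mulP4 x p q).2 = max p.2 q.2 from rfl, show (mulP4 x p' q').2 = max p'.2 q'.2 from rfl,
    mulP4_fst hH (max_le hpK hqK), mulP4_fst hH (max_le hp'K hq'K)]
  have E1 := congrArg (x.2^[K - k]) e1
  rw [← raise4 x.2 hpk (le_max_left ..), ← raise4 x.2 hp'k (le_max_left ..)] at E1
  have E2 := congrArg (x.2^[K - l]) e2
  rw [← raise4 x.2 hql (le_max_right ..), ← raise4 x.2 hq'l (le_max_right ..)] at E2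
  rw [E1, E2]

theorem mulP4_assoc (hG : IsGroupCode x.1) (hH : IsHomCode x.1 x.1 x.2) (p q r : ℕ × ℕ) :
    mulP4 x (mulP4 x p q) r = mulP4 x p (mulP4 x q r) := by
  have hs1 : (mulP4 x p q).2 = max p.2 q.2 := rfl
  have hs2 : (mulP4 x q r).2 = max q.2 r.2 := rfl
  have hK : max (max p.2 q.2) r.2 = max p.2 (max q.2 r.2) := max_assoc _ _ _
  refine Prod.ext ?_ ?_
  · show x.1 (x.2^[max (mulP4 x p q).2 r.2 - (mulP4 x p q).2] ((mulP4 x p q).1),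
        x.2^[max (mulP4 x p q).2 r.2 - r.2] r.1) = _
    rw [hs1]
    rw [mulP4_fst hH (le_max_left (max p.2 q.2) r.2)]
    show _ = x.1 (x.2^[max p.2 (mulP4 x q r).2 - p.2] p.1,
        x.2^[max p.2 (mulP4 x q r).2 - (mulP4 x q r).2] ((mulP4 x q r).1))
    rw [hs2, mulP4_fst hH (le_max_right p.2 (max q.2 r.2)), hG.1, ← hK]
  · show max (mulP4 x p q).2 r.2 = max p.2 (mulP4 x q r).2
    rw [hs1, hs2, hK]

theorem mulP4_e_left (hG : IsGroupCode x.1) (hH : IsHomCode x.1 x.1 x.2) (p : ℕ × ℕ) :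
    mulP4 x (e4 x, 0) p = p := by
  have : mulP4 x (e4 x, 0) p =
      (x.1 (x.2^[max 0 p.2 - 0] (e4 x), x.2^[max 0 p.2 - p.2] p.1), max 0 p.2) := rfl
  rw [this]
  simp only [Nat.zero_max, Nat.sub_zero, Nat.sub_self, Function.iterate_zero_apply, iter_e4 hG hH]
  rw [(e4_spec hG p.1).1]

theorem mulP4_e_right (hG : IsGroupCode x.1) (hH : IsHomCode x.1 x.1 x.2) (p : ℕ × ℕ) :
    mulP4 x p (e4 x, 0) = p := by
  have : mulP4 x p (e4 x, 0) =
      (x.1 (x.2^[max p.2 0 - p.2] p.1, x.2^[max p.2 0 - 0] (e4 x)), max p.2 0) := rfl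
  rw [this]
  simp only [Nat.max_zero, Nat.sub_zero, Nat.sub_self, Function.iterate_zero_apply, iter_e4 hG hH]
  rw [(e4_spec hG p.1).2]

theorem mulP4_same_stage (a b i : ℕ) : mulP4 x (a, i) (b, i) = (x.1 (a, b), i) := by
  have : mulP4 x (a, i) (b, i) =
      (x.1 (x.2^[max i i - i] a, x.2^[max i i - i] b), max i i) := rfl
  rw [this]; simp

theorem shiftP4_congr (h : limRel x.2 p q) : limRel x.2 (shiftP4 x p) (shiftP4 x q) := by
  obtain ⟨k, h1, h2, h3⟩ := h
  refine ⟨k, h1, h2, ?_⟩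
  show x.2^[k - p.2] (x.2 p.1) = x.2^[k - q.2] (x.2 q.1)
  rw [← Function.iterate_succ_apply, ← Function.iterate_succ_apply,
    Function.iterate_succ_apply', Function.iterate_succ_apply', h3]

theorem shiftP4_inv_congr (h : limRel x.2 (shiftP4 x p) (shiftP4 x q)) : limRel x.2 p q := by
  obtain ⟨k, h1, h2, h3⟩ := h
  have h1' : p.2 ≤ k := h1
  have h2' : q.2 ≤ k := h2
  refine ⟨k + 1, by omega, by omega, ?_⟩
  have e1 : k + 1 - p.2 = (k - p.2) + 1 := by omega
  have e2 : k + 1 - q.2 = (k - q.2) + 1 := by omega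
  rw [e1, e2, Function.iterate_succ_apply, Function.iterate_succ_apply]
  exact h3

theorem shiftP4_mulP4 (hH : IsHomCode x.1 x.1 x.2) (p q : ℕ × ℕ) :
    shiftP4 x (mulP4 x p q) = mulP4 x (shiftP4 x p) (shiftP4 x q) := by
  refine Prod.ext ?_ rfl
  show x.2 (x.1 (x.2^[max p.2 q.2 - p.2] p.1, x.2^[max p.2 q.2 - q.2] q.1))
      = x.1 (x.2^[max p.2 q.2 - p.2] (x.2 p.1), x.2^[max p.2 q.2 - q.2] (x.2 q.1))
  rw [hH, ← Function.iterate_succ_apply, ← Function.iterate_succ_apply,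
    Function.iterate_succ_apply', Function.iterate_succ_apply']

theorem shift_rel (a i : ℕ) : limRel x.2 (x.2 a, i + 1) (a, i) :=
  ⟨i + 1, le_rfl, by omega, by simp⟩

theorem e_rel (hG : IsGroupCode x.1) (hH : IsHomCode x.1 x.1 x.2) (i : ℕ) : limRel x.2 ((e4 x : ℕ), i) ((e4 x : ℕ), 0) :=
  ⟨i, le_rfl, by omega, by simp [iter_e4 hG hH]⟩

end GroupLemmas
section Meas

theorem measSet_nat (S : Set ℕ) : MeasurableSet S := S.to_countable.measurableSet

theorem meas_eval1 (p : ℕ × ℕ) : Measurable fun x : X4 => x.1 p :=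
  (measurable_pi_apply p).comp measurable_fst

theorem meas_eval2 (a : ℕ) : Measurable fun x : X4 => x.2 a :=
  (measurable_pi_apply a).comp measurable_snd

theorem meas_nat {κ : Type*} [Countable κ] [MeasurableSpace κ] {g : X4 → κ}
    (h : ∀ v, MeasurableSet {x | g x = v}) : Measurable g :=
  measurable_to_countable' fun v => h v

theorem measSet_eq {g1 g2 : X4 → ℕ} (h1 : Measurable g1) (h2 : Measurable g2) :
    MeasurableSet {x | g1 x = g2 x} := by
  have : {x | g1 x = g2 x} = ⋃ v, ({x | g1 x = v} ∩ {x | g2 x = v}) := by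
    ext x; simp only [Set.mem_setOf_eq, Set.mem_iUnion, Set.mem_inter_iff]
    exact ⟨fun h => ⟨g2 x, h, rfl⟩, fun ⟨v, hv1, hv2⟩ => hv1.trans hv2.symm⟩
  rw [this]
  exact MeasurableSet.iUnion fun v =>
    (h1 (measurableSet_singleton v)).inter (h2 (measurableSet_singleton v))

theorem meas_comp {ι : Type*} [Countable ι] [MeasurableSpace ι] [MeasurableSingletonClass ι]
    {κ : Type*} [Countable κ] [MeasurableSpace κ] [MeasurableSingletonClass κ]
    {g : X4 → ι} {H : X4 → ι → κ} (hg : Measurable g)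
    (hH : ∀ i, Measurable fun x => H x i) : Measurable fun x => H x (g x) := by
  apply meas_nat; intro v
  have : {x | H x (g x) = v} = ⋃ i, ({x | g x = i} ∩ {x | H x i = v}) := by
    ext x; simp only [Set.mem_setOf_eq, Set.mem_iUnion, Set.mem_inter_iff]
    exact ⟨fun h => ⟨g x, rfl, h⟩, fun ⟨i, hi1, hi2⟩ => by rw [hi1]; exact hi2⟩
  rw [this]
  exact MeasurableSet.iUnion fun i =>
    (hg (measurableSet_singleton i)).inter (hH i (measurableSet_singleton v))

theorem meas_post {ι : Type*} [Countable ι] [MeasurableSpace ι] [MeasurableSingletonClass ι]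
    {κ : Type*} [Countable κ] [MeasurableSpace κ] [MeasurableSingletonClass κ]
    (u : ι → κ) {g : X4 → ι} (hg : Measurable g) : Measurable fun x => u (g x) :=
  meas_comp hg fun _ => measurable_const

theorem meas_sInf {T : X4 → ℕ → Prop} (h : ∀ n, MeasurableSet {x | T x n}) :
    Measurable fun x => sInf {n | T x n} := by
  apply meas_nat; intro v
  have heq : {x | sInf {n | T x n} = v} =
      ({x | T x v} ∩ ⋂ j, ⋂ _ : j < v, {x | T x j}ᶜ) ∪
        ({x : X4 | v = 0} ∩ ⋂ n, {x | T x n}ᶜ) := by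
    ext x
    simp only [Set.mem_setOf_eq, Set.mem_union, Set.mem_inter_iff, Set.mem_iInter,
      Set.mem_compl_iff]
    constructor
    · intro hv
      by_cases hne : ∃ n, T x n
      · left
        refine ⟨hv ▸ Nat.sInf_mem hne, fun j hj hTj => ?_⟩
        have h4 : sInf {n | T x n} ≤ j := Nat.sInf_le hTj
        rw [hv] at h4; omega
      · right
        push_neg at hne
        have : {n | T x n} = ∅ := Set.eq_empty_iff_forall_notMem.mpr hne
        rw [this, Nat.sInf_empty] at hv
        exact ⟨hv.symm, hne⟩
    · rintro (⟨h1, h2⟩ | ⟨h1, h2⟩)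
      · refine le_antisymm (Nat.sInf_le h1) ?_
        by_contra hlt
        push_neg at hlt
        exact h2 _ hlt (Nat.sInf_mem (⟨v, h1⟩ : Set.Nonempty {n | T x n}))
      · have : {n | T x n} = ∅ := Set.eq_empty_iff_forall_notMem.mpr h2
        rw [this, Nat.sInf_empty]; exact h1.symm
  rw [heq]
  have hv0 : MeasurableSet {x : X4 | v = 0} := by
    by_cases h0 : v = 0 <;> simp [h0]
  exact (((h v).inter (MeasurableSet.iInter fun j => MeasurableSet.iInter fun _ =>
    (h j).compl)).union (hv0.inter (MeasurableSet.iInter fun n => (h n).compl)))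

theorem meas_iter_fix {g : X4 → ℕ} (hg : Measurable g) (k : ℕ) :
    Measurable fun x => x.2^[k] (g x) := by
  induction k with
  | zero => simpa using hg
  | succ k ih =>
    have : (fun x : X4 => x.2^[k + 1] (g x)) = fun x => x.2 (x.2^[k] (g x)) := by
      ext x; rw [Function.iterate_succ_apply']
    rw [this]
    exact meas_comp ih fun n => meas_eval2 n

theorem meas_iter {e g : X4 → ℕ} (he : Measurable e) (hg : Measurable g) :
    Measurable fun x => x.2^[e x] (g x) :=
  meas_comp (H := fun x k => x.2^[k] (g x)) he fun k => meas_iter_fix hg k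

theorem measSet_limRel {p q : X4 → ℕ × ℕ} (hp : Measurable p) (hq : Measurable q) :
    MeasurableSet {x | limRel x.2 (p x) (q x)} := by
  have heq : {x | limRel x.2 (p x) (q x)} =
      ⋃ k, ({x | (p x).2 ≤ k} ∩ {x | (q x).2 ≤ k} ∩
        {x | x.2^[k - (p x).2] (p x).1 = x.2^[k - (q x).2] (q x).1}) := by
    ext x
    simp only [Set.mem_setOf_eq, Set.mem_iUnion, Set.mem_inter_iff, limRel]
    constructor
    · rintro ⟨k, h1, h2, h3⟩; exact ⟨k, ⟨h1, h2⟩, h3⟩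
    · rintro ⟨k, ⟨h1, h2⟩, h3⟩; exact ⟨k, h1, h2, h3⟩
  rw [heq]
  have hps : Measurable fun x => (p x).2 := measurable_snd.comp hp
  have hqs : Measurable fun x => (q x).2 := measurable_snd.comp hq
  have hpf : Measurable fun x => (p x).1 := measurable_fst.comp hp
  have hqf : Measurable fun x => (q x).1 := measurable_fst.comp hq
  refine MeasurableSet.iUnion fun k => MeasurableSet.inter (MeasurableSet.inter ?_ ?_) ?_
  · exact hps (measSet_nat {n | n ≤ k})
  · exact hqs (measSet_nat {n | n ≤ k})
  · exact measSet_eq (meas_iter (meas_post (fun n => k - n) hps) hpf)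
      (meas_iter (meas_post (fun n => k - n) hqs) hqf)

theorem meas_canon {p : X4 → ℕ × ℕ} (hp : Measurable p) :
    Measurable fun x => canon4 x (p x) :=
  meas_sInf fun n => measSet_limRel measurable_const hp

theorem measSet_S4 (n : ℕ) : MeasurableSet {x : X4 | S4 x n} :=
  measSet_eq (meas_canon measurable_const) measurable_const

theorem meas_count (v : ℕ) : Measurable fun x : X4 => Nat.count (S4 x) v := by
  induction v with
  | zero => simpa [Nat.count_zero] using (measurable_const : Measurable fun _ : X4 => 0)
  | succ v ih =>
    have : (fun x : X4 => Nat.count (S4 x) (v + 1)) =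
        fun x => Nat.count (S4 x) v + if S4 x v then 1 else 0 := by
      ext x; rw [Nat.count_succ]
    rw [this]
    exact ih.add (Measurable.ite (measSet_S4 v) measurable_const measurable_const)

theorem meas_nth : ∀ m : ℕ, Measurable fun x : X4 => Nat.nth (S4 x) m := by
  intro m
  induction m using Nat.strong_induction_on with
  | _ m ih =>
    have heq : (fun x : X4 => Nat.nth (S4 x) m) =
        fun x => sInf {i | S4 x i ∧ ∀ k < m, Nat.nth (S4 x) k < i} := by
      ext x; exact Nat.nth_eq_sInf _ _
    rw [heq]
    apply meas_sInf
    intro i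
    have heq2 : {x : X4 | S4 x i ∧ ∀ k < m, Nat.nth (S4 x) k < i} =
        {x | S4 x i} ∩ ⋂ k, ⋂ _ : k < m, {x | Nat.nth (S4 x) k < i} := by
      ext x
      simp only [Set.mem_setOf_eq, Set.mem_inter_iff, Set.mem_iInter]
    rw [heq2]
    exact (measSet_S4 i).inter (MeasurableSet.iInter fun k => MeasurableSet.iInter fun hk =>
      (ih k hk) (measSet_nat {n | n < i}))

theorem meas_iota {p : X4 → ℕ × ℕ} (hp : Measurable p) :
    Measurable fun x => iota4 x (p x) :=
  meas_comp (H := fun x n => Nat.count (S4 x) n) (meas_canon hp) fun n => meas_count n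

theorem meas_rep (m : ℕ) : Measurable fun x : X4 => rep4 x m :=
  meas_post Nat.unpair (meas_nth m)

theorem meas_mulP {p q : X4 → ℕ × ℕ} (hp : Measurable p) (hq : Measurable q) :
    Measurable fun x => mulP4 x (p x) (q x) := by
  have hps : Measurable fun x => (p x).2 := measurable_snd.comp hp
  have hqs : Measurable fun x => (q x).2 := measurable_snd.comp hq
  have hpf : Measurable fun x => (p x).1 := measurable_fst.comp hp
  have hqf : Measurable fun x => (q x).1 := measurable_fst.comp hq
  have hmax : Measurable fun x => max (p x).2 (q x).2 := hps.max hqs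
  have hu : Measurable fun x => x.2^[max (p x).2 (q x).2 - (p x).2] (p x).1 :=
    meas_iter (meas_post (fun i : ℕ × ℕ => max i.1 i.2 - i.1) (hps.prodMk hqs)) hpf
  have hv : Measurable fun x => x.2^[max (p x).2 (q x).2 - (q x).2] (q x).1 :=
    meas_iter (meas_post (fun i : ℕ × ℕ => max i.1 i.2 - i.2) (hps.prodMk hqs)) hqf
  have : (fun x => mulP4 x (p x) (q x)) = fun x =>
      ((x.1 (x.2^[max (p x).2 (q x).2 - (p x).2] (p x).1,
        x.2^[max (p x).2 (q x).2 - (q x).2] (q x).1), max (p x).2 (q x).2) : ℕ × ℕ) := rfl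
  rw [this]
  exact Measurable.prodMk
    (meas_comp (H := fun x i => x.1 i) (hu.prodMk hv) fun i => meas_eval1 i) hmax

theorem meas_shift {p : X4 → ℕ × ℕ} (hp : Measurable p) :
    Measurable fun x => shiftP4 x (p x) := by
  have : (fun x => shiftP4 x (p x)) = fun x => ((x.2 (p x).1, (p x).2) : ℕ × ℕ) := rfl
  rw [this]
  exact Measurable.prodMk (meas_comp (H := fun x n => x.2 n) (measurable_fst.comp hp)
    fun n => meas_eval2 n) (measurable_snd.comp hp)

theorem meas_F4 : Measurable F4 := by
  unfold F4
  apply Measurable.prodMk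
  · apply measurable_pi_lambda
    intro mn
    exact meas_iota (meas_mulP (meas_rep mn.1) (meas_rep mn.2))
  · apply measurable_pi_lambda
    intro m
    exact meas_iota (meas_shift (meas_rep m))

end Meas

theorem infinite_S4_iff (x : X4) :
    Infinite (Quot (limRel x.2)) ↔ (setOf (S4 x)).Infinite := by
  constructor
  · intro h
    haveI := h
    rw [← Set.infinite_coe_iff]
    have ginj : Function.Injective
        (Quot.lift (fun p => (⟨canon4 x p, S4_canon x p⟩ : {n // S4 x n}))
          (fun p q hpq => Subtype.ext (canon4_congr hpq))) := by
      intro q1 q2 hq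
      induction q1 using Quot.ind with | _ p1 =>
      induction q2 using Quot.ind with | _ p2 =>
      exact Quot.sound (canon4_inj (congrArg Subtype.val hq))
    exact Infinite.of_injective _ ginj
  · intro h
    haveI : Infinite {n // S4 x n} := Set.infinite_coe_iff.mpr h
    have ginj : Function.Injective
        (fun n : {n // S4 x n} => Quot.mk (limRel x.2) (Nat.unpair n.1)) := by
      rintro ⟨n, hn⟩ ⟨m, hm⟩ hq
      have h1 : limRel x.2 (Nat.unpair n) (Nat.unpair m) :=
        ((limRel_equiv x.2).eqvGen_iff).mp (Quot.eq.mp hq)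
      apply Subtype.ext
      show n = m
      calc n = canon4 x (Nat.unpair n) := hn.symm
        _ = canon4 x (Nat.unpair m) := canon4_congr h1
        _ = m := hm
    exact Infinite.of_injective _ ginj

theorem measSet_EndCode : MeasurableSet EndCode := by
  have h1 : MeasurableSet {x : X4 | IsGroupCode x.1} := by
    have heq : {x : X4 | IsGroupCode x.1} =
        (⋂ a, ⋂ b, ⋂ c, {x : X4 | x.1 (x.1 (a, b), c) = x.1 (a, x.1 (b, c))}) ∩
          ⋃ e, ((⋂ a, ({x : X4 | x.1 (e, a) = a} ∩ {x : X4 | x.1 (a, e) = a})) ∩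
            ⋂ a, ⋃ b, ({x : X4 | x.1 (a, b) = e} ∩ {x : X4 | x.1 (b, a) = e})) := by
      ext x
      simp only [Set.mem_setOf_eq, Set.mem_inter_iff, Set.mem_iInter, Set.mem_iUnion,
        IsGroupCode]
    rw [heq]
    have hXY : ∀ u v : X4 → ℕ, Measurable u → Measurable v →
        MeasurableSet {x : X4 | u x = v x} := fun u v hu hv => measSet_eq hu hv
    refine MeasurableSet.inter ?_ ?_
    · exact MeasurableSet.iInter fun a => MeasurableSet.iInter fun b =>
        MeasurableSet.iInter fun c => measSet_eq
          (meas_comp (H := fun x i => x.1 (i, c)) (meas_eval1 (a, b))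
            (fun i => meas_eval1 (i, c)))
          (meas_comp (H := fun x i => x.1 (a, i)) (meas_eval1 (b, c))
            (fun i => meas_eval1 (a, i)))
    · refine MeasurableSet.iUnion fun e => MeasurableSet.inter ?_ ?_
      · exact MeasurableSet.iInter fun a =>
          ((measSet_eq (meas_eval1 (e, a)) measurable_const).inter
            (measSet_eq (meas_eval1 (a, e)) measurable_const))
      · exact MeasurableSet.iInter fun a => MeasurableSet.iUnion fun b =>
          ((measSet_eq (meas_eval1 (a, b)) measurable_const).inter
            (measSet_eq (meas_eval1 (b, a)) measurable_const))
  have h2 : MeasurableSet {x : X4 | IsHomCode x.1 x.1 x.2} := by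
    have heq : {x : X4 | IsHomCode x.1 x.1 x.2} =
        ⋂ a, ⋂ b, {x : X4 | x.2 (x.1 (a, b)) = x.1 (x.2 a, x.2 b)} := by
      ext x; simp only [Set.mem_setOf_eq, Set.mem_iInter, IsHomCode]
    rw [heq]
    exact MeasurableSet.iInter fun a => MeasurableSet.iInter fun b => measSet_eq
      (meas_comp (H := fun x i => x.2 i) (meas_eval1 (a, b)) (fun i => meas_eval2 i))
      (meas_comp (H := fun x i => x.1 i) ((meas_eval2 a).prodMk (meas_eval2 b))
        (fun i => meas_eval1 i))
  have h3 : MeasurableSet {x : X4 | Function.Injective x.2} := by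
    have heq : {x : X4 | Function.Injective x.2} =
        ⋂ a, ⋂ b, {x : X4 | x.2 a = x.2 b → a = b} := by
      ext x
      simp only [Set.mem_setOf_eq, Set.mem_iInter, Function.Injective]
    rw [heq]
    refine MeasurableSet.iInter fun a => MeasurableSet.iInter fun b => ?_
    by_cases hab : a = b
    · have : {x : X4 | x.2 a = x.2 b → a = b} = Set.univ := by
        ext x; simp [hab]
      rw [this]; exact MeasurableSet.univ
    · have : {x : X4 | x.2 a = x.2 b → a = b} = {x : X4 | x.2 a = x.2 b}ᶜ := by
        ext x; simp only [Set.mem_setOf_eq, Set.mem_compl_iff]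
        exact ⟨fun h h2 => hab (h h2), fun h h2 => absurd h2 h⟩
      rw [this]
      exact (measSet_eq (meas_eval2 a) (meas_eval2 b)).compl
  have heq : EndCode = {x : X4 | IsGroupCode x.1} ∩ ({x : X4 | IsHomCode x.1 x.1 x.2} ∩
      {x : X4 | Function.Injective x.2}) := by
    ext x; simp [EndCode, Set.mem_setOf_eq, and_assoc]
  rw [heq]
  exact h1.inter (h2.inter h3)

theorem measSet_DLimCode : MeasurableSet DLimCode := by
  have heq : DLimCode = EndCode ∩ {x : X4 | (setOf (S4 x)).Infinite} := by
    ext x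
    simp only [DLimCode, Set.mem_setOf_eq, Set.mem_inter_iff]
    exact and_congr_right fun _ => infinite_S4_iff x
  rw [heq]
  refine measSet_EndCode.inter ?_
  have heq2 : {x : X4 | (setOf (S4 x)).Infinite} = ⋂ N, ⋃ n, ⋃ _ : N < n, {x : X4 | S4 x n} := by
    ext x
    simp only [Set.mem_setOf_eq, Set.mem_iInter, Set.mem_iUnion]
    constructor
    · intro h N
      obtain ⟨n, hn, hgt⟩ := h.exists_gt N
      exact ⟨n, hgt, hn⟩
    · intro h
      apply Set.infinite_of_forall_exists_gt
      intro a
      obtain ⟨n, hgt, hn⟩ := h a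
      exact ⟨n, hn, hgt⟩
  rw [heq2]
  exact MeasurableSet.iInter fun N => MeasurableSet.iUnion fun n =>
    MeasurableSet.iUnion fun _ => measSet_S4 n

end Stmt4Aux

/-- `DLim_𝒢` is Borel, and there is a Borel map sending `(G, α) ∈ DLim_𝒢` to a pair
`(G', α')` in `End_𝒢` such that `α'` is an *automorphism* of the group coded by `G'` and
the group coded by `G'`, together with `α'`, is isomorphic to the direct limit
`G_∞ = lim (G, α)` equipped with the induced automorphism `α_∞`.

The isomorphism `θ : G_∞ → G'` is encoded by the maps `ψ n = θ ∘ φ_n : G → G'`, where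
`φ_n : G → G_∞` is the canonical map from the `n`-th stage into the limit (so that
`φ_n = φ_{n+1} ∘ α` and `α_∞ ∘ φ_{n+1} = φ_n`). The listed conditions state precisely
that each `ψ n` is a homomorphism, that `ψ n = ψ (n+1) ∘ α`, that the `ψ n` are jointly
surjective, that `ψ n a = ψ n b` iff the images of `a` and `b` agree at some later stage
(injectivity of `θ`), and that `α' ∘ ψ (n+1) = ψ n` (i.e. `θ ∘ α_∞ = α' ∘ θ`). -/

theorem stmt4 :
    MeasurableSet DLimCode ∧
      ∃ F : (ℕ × ℕ → ℕ) × (ℕ → ℕ) → (ℕ × ℕ → ℕ) × (ℕ → ℕ), Measurable F ∧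
        ∀ x ∈ DLimCode,
          F x ∈ EndCode ∧ Function.Bijective (F x).2 ∧
            ∃ ψ : ℕ → ℕ → ℕ,
              (∀ n, IsHomCode x.1 (F x).1 (ψ n)) ∧
              (∀ n a, ψ (n + 1) (x.2 a) = ψ n a) ∧
              (∀ y, ∃ n a, ψ n a = y) ∧
              (∀ n a b, ψ n a = ψ n b ↔ ∃ k, x.2^[k] a = x.2^[k] b) ∧
              (∀ n a, (F x).2 (ψ (n + 1) a) = ψ n a)  := by
  constructor
  · exact measSet_DLimCode
  · refine ⟨F4, meas_F4, ?_⟩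
    rintro x ⟨⟨hG, hH, hinj⟩, hQ⟩
    have hinf : (setOf (S4 x)).Infinite := (infinite_S4_iff x).mp hQ
    have key : ∀ m n : ℕ, (F4 x).1 (m, n) = iota4 x (mulP4 x (rep4 x m) (rep4 x n)) :=
      fun _ _ => rfl
    have key2 : ∀ m : ℕ, (F4 x).2 m = iota4 x (shiftP4 x (rep4 x m)) := fun _ => rfl
    have hrep : ∀ p : ℕ × ℕ, limRel x.2 (rep4 x (iota4 x p)) p := rep4_iota4 x
    set e' : ℕ := iota4 x (e4 x, 0) with he'def
    -- group code
    have hassoc : ∀ a b c : ℕ, (F4 x).1 ((F4 x).1 (a, b), c) = (F4 x).1 (a, (F4 x).1 (b, c)) := by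
      intro a b c
      rw [key a b, key b c, key, key]
      apply iota4_congr
      have h1 : limRel x.2 (mulP4 x (rep4 x (iota4 x (mulP4 x (rep4 x a) (rep4 x b)))) (rep4 x c))
          (mulP4 x (mulP4 x (rep4 x a) (rep4 x b)) (rep4 x c)) :=
        mulP4_congr hH (hrep _) (limRel_refl x.2 _)
      have h2 : limRel x.2 (mulP4 x (rep4 x a) (rep4 x (iota4 x (mulP4 x (rep4 x b) (rep4 x c)))))
          (mulP4 x (rep4 x a) (mulP4 x (rep4 x b) (rep4 x c))) :=
        mulP4_congr hH (limRel_refl x.2 _) (hrep _)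
      rw [mulP4_assoc hG hH] at h1
      exact limRel_trans h1 (limRel_symm h2)
    have hident : ∀ a : ℕ, (F4 x).1 (e', a) = a ∧ (F4 x).1 (a, e') = a := by
      intro a
      constructor
      · rw [key]
        have h1 : limRel x.2 (mulP4 x (rep4 x e') (rep4 x a)) (rep4 x a) := by
          have h2 := mulP4_congr hH (hrep (e4 x, 0)) (limRel_refl x.2 (rep4 x a))
          rw [mulP4_e_left hG hH] at h2
          exact h2
        rw [iota4_congr h1, iota4_rep4 hinf]
      · rw [key]
        have h1 : limRel x.2 (mulP4 x (rep4 x a) (rep4 x e')) (rep4 x a) := by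
          have h2 := mulP4_congr hH (limRel_refl x.2 (rep4 x a)) (hrep (e4 x, 0))
          rw [mulP4_e_right hG hH] at h2
          exact h2
        rw [iota4_congr h1, iota4_rep4 hinf]
    have hinv : ∀ a : ℕ, ∃ b, (F4 x).1 (a, b) = e' ∧ (F4 x).1 (b, a) = e' := by
      intro a
      obtain ⟨b, hb1, hb2⟩ := exists_inv4 hG ((rep4 x a).1)
      refine ⟨iota4 x (b, (rep4 x a).2), ?_, ?_⟩
      · rw [key]
        have h1 : limRel x.2 (mulP4 x (rep4 x a) (rep4 x (iota4 x (b, (rep4 x a).2))))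
            (mulP4 x (rep4 x a) (b, (rep4 x a).2)) :=
          mulP4_congr hH (limRel_refl x.2 _) (hrep _)
        have h3 : mulP4 x (rep4 x a) (b, (rep4 x a).2) = ((e4 x : ℕ), (rep4 x a).2) := by
          rw [show rep4 x a = ((rep4 x a).1, (rep4 x a).2) from rfl, mulP4_same_stage, hb1]
        rw [h3] at h1
        rw [iota4_congr (limRel_trans h1 (e_rel hG hH _))]
      · rw [key]
        have h1 : limRel x.2 (mulP4 x (rep4 x (iota4 x (b, (rep4 x a).2))) (rep4 x a))
            (mulP4 x (b, (rep4 x a).2) (rep4 x a)) :=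
          mulP4_congr hH (hrep _) (limRel_refl x.2 _)
        have h3 : mulP4 x (b, (rep4 x a).2) (rep4 x a) = ((e4 x : ℕ), (rep4 x a).2) := by
          rw [show rep4 x a = ((rep4 x a).1, (rep4 x a).2) from rfl, mulP4_same_stage, hb2]
        rw [h3] at h1
        rw [iota4_congr (limRel_trans h1 (e_rel hG hH _))]
    have hGC : IsGroupCode (F4 x).1 := ⟨hassoc, e', hident, hinv⟩
    have hHC : IsHomCode (F4 x).1 (F4 x).1 (F4 x).2 := by
      intro m n
      rw [key, key2, key2, key2, key]
      apply iota4_congr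
      have h1 : limRel x.2 (shiftP4 x (rep4 x (iota4 x (mulP4 x (rep4 x m) (rep4 x n)))))
          (shiftP4 x (mulP4 x (rep4 x m) (rep4 x n))) := shiftP4_congr (hrep _)
      rw [shiftP4_mulP4 hH] at h1
      have h2 : limRel x.2
          (mulP4 x (rep4 x (iota4 x (shiftP4 x (rep4 x m))))
            (rep4 x (iota4 x (shiftP4 x (rep4 x n)))))
          (mulP4 x (shiftP4 x (rep4 x m)) (shiftP4 x (rep4 x n))) :=
        mulP4_congr hH (hrep _) (hrep _)
      exact limRel_trans h1 (limRel_symm h2)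
    have hinj2 : Function.Injective (F4 x).2 := by
      intro m n h
      rw [key2, key2] at h
      have h1 := shiftP4_inv_congr (iota4_inj h)
      have h2 := iota4_congr h1
      rwa [iota4_rep4 hinf, iota4_rep4 hinf] at h2
    have hsurj2 : Function.Surjective (F4 x).2 := by
      intro m
      refine ⟨iota4 x ((rep4 x m).1, (rep4 x m).2 + 1), ?_⟩
      rw [key2]
      have h1 : limRel x.2 (shiftP4 x (rep4 x (iota4 x ((rep4 x m).1, (rep4 x m).2 + 1))))
          (shiftP4 x ((rep4 x m).1, (rep4 x m).2 + 1)) := shiftP4_congr (hrep _)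
      have h2 : limRel x.2 (shiftP4 x ((rep4 x m).1, (rep4 x m).2 + 1)) (rep4 x m) := by
        have := shift_rel (x := x) ((rep4 x m).1) ((rep4 x m).2)
        exact this
      rw [iota4_congr (limRel_trans h1 h2), iota4_rep4 hinf]
    refine ⟨⟨hGC, hHC, hinj2⟩, ⟨hinj2, hsurj2⟩, fun n a => iota4 x (a, n), ?_, ?_, ?_, ?_, ?_⟩
    · -- hom
      intro n a b
      rw [key]
      apply iota4_congr
      have h1 : limRel x.2 (mulP4 x (rep4 x (iota4 x (a, n))) (rep4 x (iota4 x (b, n))))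
          (mulP4 x (a, n) (b, n)) := mulP4_congr hH (hrep _) (hrep _)
      rw [mulP4_same_stage] at h1
      exact limRel_symm h1
    · intro n a
      exact iota4_congr (shift_rel a n)
    · intro y
      exact ⟨(rep4 x y).2, (rep4 x y).1, iota4_rep4 hinf y⟩
    · intro n a b
      constructor
      · intro h
        obtain ⟨k, hk1, hk2, e⟩ := iota4_inj h
        exact ⟨k - n, e⟩
      · rintro ⟨k, e⟩
        apply iota4_congr
        refine ⟨n + k, by omega, by omega, ?_⟩
        show x.2^[n + k - n] a = x.2^[n + k - n] b
        rw [show n + k - n = k from by omega]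
        exact e
    · intro n a
      rw [key2]
      have h1 : limRel x.2 (shiftP4 x (rep4 x (iota4 x (a, n + 1)))) (shiftP4 x (a, n + 1)) :=
        shiftP4_congr (hrep _)
      have h2 : limRel x.2 (shiftP4 x (a, n + 1)) (a, n) := shift_rel a n
      exact iota4_congr (limRel_trans h1 h2)
end

section
/- There is a Borel function from 𝒜𝒢 to 𝒜𝒢_TF × ℕ^ℕ that assigns to every (code for a) countable abelian group G a pair (H, α), where H codes a countable torsion-free abelian group and α is an automorphism of the group coded by H, such that the quotient group H / (id_H − α)[H] is isomorphic to G, where (id_H − α)[H] denotes the image of the endomorphism h ↦ h − α(h) of H. -/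
/-- `e` is the identity element of the group coded by `f`. -/
def IsIdentityOf (f : ℕ × ℕ → ℕ) (e : ℕ) : Prop :=
  ∀ a, f (e, a) = a ∧ f (a, e) = a

/-- `codePow f x n` is the power `x^(n+1)` in the group coded by `f`. -/
def codePow (f : ℕ × ℕ → ℕ) (x : ℕ) : ℕ → ℕ
  | 0 => x
  | n + 1 => f (x, codePow f x n)

/-- The set `𝒜𝒢` of codes for abelian groups. -/
def AGCode : Set (ℕ × ℕ → ℕ) :=
  {f | IsGroupCode f ∧ ∀ a b, f (a, b) = f (b, a)}

/-- The group coded by `f` is torsion-free: `x^n = e` for some `n ≥ 1` implies `x = e`. -/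
def IsTorsionFreeCode (f : ℕ × ℕ → ℕ) : Prop :=
  ∀ e, IsIdentityOf f e → ∀ x n, codePow f x n = e → x = e

/-- The set `𝒜𝒢_TF` of codes for torsion-free abelian groups. -/
def AGTFCode : Set (ℕ × ℕ → ℕ) :=
  {f | f ∈ AGCode ∧ IsTorsionFreeCode f}

/-!
Let `F` be the free abelian group on generators `x_m` (`m ∈ G`) and `y_{k,j}` (`k ≥ 1`, `j ∈ ℕ`),
with `x_m` in layer `0` and `y_{k,j}` in layer `k`; in the index type `ℕ × ℕ` these are `(0, m)`
and `(k, j)`. Let `ν` (`lower`) send `x_m` to `0`, `y_{1,⟨a,b⟩}` to the relator `x_a + x_b - x_{ab}`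
and `y_{k+1,j}` to `y_{k,j}`. Since `ν` lowers the layer it is locally nilpotent, so `α = 1 + ν` is
an automorphism, and `(id - α)[F] = ν[F]`. This image is spanned by the relators and all the
`y_{k,j}`, which is exactly the kernel of `F → G`, `x_m ↦ m`, `y_{k,j} ↦ 0`. The group `F` does not
depend on `G`, and every coordinate of `ν` depends on finitely many entries of the multiplication
table of `G`, whence measurability.
-/

open Finsupp

section TransportCode

variable {A B : Type*} [AddCommGroup A] [AddCommGroup B]

def transportCode (e : A ≃ ℕ) : ℕ × ℕ → ℕ := fun p => e (e.symm p.1 + e.symm p.2)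

variable (e : A ≃ ℕ)

theorem isIdentityOf_transportCode : IsIdentityOf (transportCode e) (e 0) := fun a => by
  simp [transportCode]

theorem transportCode_neg (a : ℕ) :
    transportCode e (a, e (-e.symm a)) = e 0 ∧ transportCode e (e (-e.symm a), a) = e 0 := by
  simp [transportCode]

theorem transportCode_mem_AGCode : transportCode e ∈ AGCode :=
  ⟨⟨fun a b c => by simp [transportCode, add_assoc], e 0, isIdentityOf_transportCode e,
      fun a => ⟨_, transportCode_neg e a⟩⟩,
    fun a b => by simp [transportCode, add_comm]⟩

theorem codePow_transportCode (x n : ℕ) :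
    codePow (transportCode e) x n = e ((n + 1) • e.symm x) := by
  induction n with
  | zero => simp [codePow]
  | succ n ih => simp [codePow, ih, transportCode, succ_nsmul' _ (n + 1)]

theorem transportCode_mem_AGTFCode [IsAddTorsionFree A] : transportCode e ∈ AGTFCode := by
  refine ⟨transportCode_mem_AGCode e, fun e' he' x n hx => ?_⟩
  have he'_eq : e' = e 0 := by simpa [transportCode] using (he' (e 0)).2
  subst he'_eq
  rw [codePow_transportCode, e.apply_eq_iff_eq] at hx
  exact e.symm_apply_eq.mp (nsmul_right_injective n.succ_ne_zero (hx.trans (nsmul_zero _).symm))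

theorem isHomCode_transportCode (e' : B ≃ ℕ) (φ : A →+ B) :
    IsHomCode (transportCode e) (transportCode e') (e' ∘ φ ∘ e.symm) := fun a b => by
  simp [transportCode]

theorem exists_eq_transportCode_iff_mem_range {R : Type*} [Ring R] [Module R A]
    (ν : Module.End R A) (x : ℕ) :
    (∃ y, x = transportCode e (y, e (-e.symm ((e ∘ ⇑(1 + ν) ∘ e.symm) y)))) ↔
      e.symm x ∈ LinearMap.range ν := by
  have key : ∀ y, transportCode e (y, e (-e.symm ((e ∘ ⇑(1 + ν) ∘ e.symm) y))) =
      e (-ν (e.symm y)) := fun y => by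
    simp [transportCode, ← add_assoc]
  simp only [key, ← e.symm_apply_eq, LinearMap.mem_range]
  constructor
  · rintro ⟨y, hy⟩
    exact ⟨-e.symm y, by simp [← hy]⟩
  · rintro ⟨w, hw⟩
    exact ⟨e (-w), by simp [hw]⟩

end TransportCode

structure CodedGroup (f : ℕ × ℕ → ℕ) (hf : f ∈ AGCode) where
  ofNat ::
  val : ℕ

namespace CodedGroup

variable {f : ℕ × ℕ → ℕ} (hf : f ∈ AGCode)

noncomputable instance : Zero (CodedGroup f hf) := ⟨⟨Classical.choose hf.1.2⟩⟩

theorem isIdentityOf_zero_val : IsIdentityOf f (0 : CodedGroup f hf).val :=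
  (Classical.choose_spec hf.1.2).1

instance : Add (CodedGroup f hf) := ⟨fun a b => ⟨f (a.val, b.val)⟩⟩

noncomputable instance : Neg (CodedGroup f hf) :=
  ⟨fun a => ⟨Classical.choose ((Classical.choose_spec hf.1.2).2 a.val)⟩⟩

noncomputable instance : AddCommGroup (CodedGroup f hf) :=
  { AddGroup.ofLeftAxioms
      (fun a b c => congrArg ofNat (hf.1.1 a.val b.val c.val))
      (fun a => congrArg ofNat ((isIdentityOf_zero_val hf a.val).1))
      (fun a => congrArg ofNat (Classical.choose_spec ((Classical.choose_spec hf.1.2).2 a.val)).2)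
    with
    add_comm := fun a b => congrArg ofNat (hf.2 a.val b.val) }

theorem ofNat_add_ofNat (a b : ℕ) :
    (ofNat a + ofNat b : CodedGroup f hf) = ofNat (f (a, b)) := rfl

def equivNat : CodedGroup f hf ≃ ℕ := ⟨val, ofNat, fun _ => rfl, fun _ => rfl⟩

end CodedGroup

section LocallyNilpotent

variable {R M : Type*} [Ring R] [AddCommGroup M] [Module R M]

open Finset in
theorem Module.End.bijective_one_add_of_forall_exists_pow_apply_eq_zero (ν : Module.End R M)
    (hν : ∀ v, ∃ k, (ν ^ k) v = 0) : Function.Bijective ⇑(1 + ν) := by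
  have one_add : (1 + ν) = 1 - -ν := (sub_neg_eq_add 1 ν).symm
  have geom_apply : ∀ v k, (ν ^ k) v = 0 → (1 - (-ν) ^ k) v = v := fun v k hk => by
    rw [neg_pow, LinearMap.sub_apply, Module.End.mul_apply, hk, map_zero, sub_zero,
      Module.End.one_apply]
  refine ⟨(injective_iff_map_eq_zero _).mpr fun v hv => ?_, fun w => ?_⟩
  · obtain ⟨k, hk⟩ := hν v
    rw [← geom_apply v k hk, ← geom_sum_mul_neg, Module.End.mul_apply, ← one_add, hv, map_zero]
  · obtain ⟨k, hk⟩ := hν w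
    refine ⟨(∑ i ∈ range k, (-ν) ^ i) w, ?_⟩
    rw [← Module.End.mul_apply, one_add, mul_neg_geom_sum, geom_apply w k hk]

end LocallyNilpotent

namespace LayeredPresentation

noncomputable def freeEquivNat : (ℕ × ℕ →₀ ℤ) ≃ ℕ :=
  letI := (nonempty_denumerable (ℕ × ℕ →₀ ℤ)).some
  Denumerable.eqv _

section Lower

variable (f : ℕ × ℕ → ℕ)

noncomputable def relator (p : ℕ × ℕ) : ℕ × ℕ →₀ ℤ :=
  single (0, p.1) 1 + single (0, p.2) 1 - single (0, f p) 1

noncomputable def lowerGen : ℕ × ℕ → (ℕ × ℕ →₀ ℤ)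
  | (0, _) => 0
  | (1, j) => relator f (Nat.unpair j)
  | (k + 2, j) => single (k + 1, j) 1

noncomputable def lower : Module.End ℤ (ℕ × ℕ →₀ ℤ) := linearCombination ℤ (lowerGen f)

theorem lower_single (n : ℕ × ℕ) : lower f (single n 1) = lowerGen f n := by
  simp [lower]

theorem relator_mem_range_lower (p : ℕ × ℕ) : relator f p ∈ LinearMap.range (lower f) :=
  ⟨single (1, Nat.pair p.1 p.2) 1, by simp [lower_single, lowerGen]⟩

theorem single_succ_mem_range_lower (k j : ℕ) :
    single (k + 1, j) 1 ∈ LinearMap.range (lower f) :=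
  ⟨single (k + 2, j) 1, lower_single f _⟩

theorem map_lower_supported_le (k : ℕ) :
    (supported ℤ ℤ {n : ℕ × ℕ | n.1 < k + 1}).map (lower f) ≤
      supported ℤ ℤ {n : ℕ × ℕ | n.1 < k} := by
  rw [supported_eq_span_single, Submodule.map_span_le]
  rintro _ ⟨⟨_ | _ | l, j⟩, hn, rfl⟩
  · simp [lower_single, lowerGen]
  · have hk : 0 < k := Nat.succ_lt_succ_iff.mp hn
    simp only [lower_single, lowerGen, relator]
    exact sub_mem (add_mem (single_mem_supported ℤ _ hk) (single_mem_supported ℤ _ hk))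
      (single_mem_supported ℤ _ hk)
  · have hl : l + 1 < k := Nat.succ_lt_succ_iff.mp hn
    simpa only [lower_single, lowerGen] using single_mem_supported ℤ (1 : ℤ) (a := (l + 1, j)) hl

theorem lower_pow_apply_eq_zero (k : ℕ) (v : ℕ × ℕ →₀ ℤ)
    (hv : v ∈ supported ℤ ℤ {n : ℕ × ℕ | n.1 < k}) : (lower f ^ k) v = 0 := by
  induction k generalizing v with
  | zero => simpa using hv
  | succ k ih =>
    rw [pow_succ, Module.End.mul_apply]
    exact ih _ (map_lower_supported_le f k ⟨v, hv, rfl⟩)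

theorem exists_lower_pow_apply_eq_zero (v : ℕ × ℕ →₀ ℤ) : ∃ k, (lower f ^ k) v = 0 :=
  ⟨v.support.sup Prod.fst + 1, lower_pow_apply_eq_zero f _ v fun _ hn =>
    Nat.lt_succ_of_le (Finset.le_sup (f := Prod.fst) hn)⟩

end Lower

section Projection

variable {f : ℕ × ℕ → ℕ} (hf : f ∈ AGCode)

noncomputable def projGen : ℕ × ℕ → CodedGroup f hf
  | (0, m) => .ofNat m
  | (_ + 1, _) => 0

noncomputable def proj : (ℕ × ℕ →₀ ℤ) →ₗ[ℤ] CodedGroup f hf := linearCombination ℤ (projGen hf)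

theorem proj_single (n : ℕ × ℕ) : proj hf (single n 1) = projGen hf n := by
  simp [proj]

theorem proj_surjective : Function.Surjective (proj hf) := fun g =>
  ⟨single (0, g.val) 1, proj_single hf _⟩

theorem proj_comp_lower : proj hf ∘ₗ lower f = 0 := by
  ext ⟨_ | _ | k, j⟩
  · simp [lower_single, lowerGen]
  · simp [lower_single, lowerGen, relator, proj_single, projGen, CodedGroup.ofNat_add_ofNat]
  · simp [lower_single, lowerGen, proj_single, projGen]

/-- The relators make `m ↦ [x_m]` a homomorphism `G → F ⧸ ν[F]`, and the quotient map
`F → F ⧸ ν[F]` factors through `proj` via it. -/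
theorem ker_proj_le_range_lower : LinearMap.ker (proj hf) ≤ LinearMap.range (lower f) := by
  set K := LinearMap.range (lower f)
  let ψ : CodedGroup f hf →+ (ℕ × ℕ →₀ ℤ) ⧸ K :=
    AddMonoidHom.mk' (fun g => K.mkQ (single (0, g.val) 1)) fun a b => by
      rw [← map_add, eq_comm, Submodule.mkQ_apply, Submodule.mkQ_apply, Submodule.Quotient.eq]
      exact relator_mem_range_lower f (a.val, b.val)
  have mkQ_eq : K.mkQ = ψ.toIntLinearMap ∘ₗ proj hf := by
    ext ⟨_ | k, j⟩
    · simp [ψ, proj_single, projGen]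
    · simp only [LinearMap.comp_apply, lsingle_apply, proj_single, projGen, map_zero,
        Submodule.mkQ_apply, Submodule.Quotient.mk_eq_zero]
      exact single_succ_mem_range_lower f k j
  intro v hv
  rw [← Submodule.Quotient.mk_eq_zero, ← Submodule.mkQ_apply, mkQ_eq, LinearMap.comp_apply,
    LinearMap.mem_ker.mp hv, map_zero]

theorem ker_proj : LinearMap.ker (proj hf) = LinearMap.range (lower f) :=
  le_antisymm (ker_proj_le_range_lower hf) (LinearMap.range_le_ker_iff.mpr (proj_comp_lower hf))

end Projection

section Measurability

local instance : MeasurableSpace (ℕ × ℕ →₀ ℤ) := ⊤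

theorem measurable_lowerGen : ∀ n : ℕ × ℕ, Measurable fun f => lowerGen f n
  | (0, _) => measurable_const
  | (1, j) => (Measurable.of_discrete (f := fun m => single (0, (Nat.unpair j).1) 1 +
      single (0, (Nat.unpair j).2) 1 - single (0, m) (1 : ℤ))).comp (measurable_pi_apply _)
  | (_ + 2, _) => measurable_const

theorem measurable_lower_apply (v : ℕ × ℕ →₀ ℤ) : Measurable fun f => lower f v := by
  simp only [lower, linearCombination_apply, Finsupp.sum]
  exact Finset.measurable_sum _ fun n _ => Measurable.of_discrete.comp (measurable_lowerGen n)

theorem measurable_conj_one_add_lower (e : (ℕ × ℕ →₀ ℤ) ≃ ℕ) :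
    Measurable fun f => e ∘ ⇑(1 + lower f) ∘ e.symm :=
  measurable_pi_lambda _ fun a => Measurable.of_discrete.comp
    (measurable_const.add (measurable_lower_apply (e.symm a)))

end Measurability

end LayeredPresentation

open LayeredPresentation in
/-- The isomorphism `H / (id_H − α)[H] ≅ G` is encoded by a surjective homomorphism
`π : H → G` whose kernel is the image of `id_H − α`, i.e. (written multiplicatively)
`π x = e_G ↔ ∃ y, x = y · (α y)⁻¹`. -/
theorem stmt5 :
    ∃ F : (ℕ × ℕ → ℕ) → (ℕ × ℕ → ℕ) × (ℕ → ℕ), Measurable F ∧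
      ∀ f ∈ AGCode,
        (F f).1 ∈ AGTFCode ∧
        IsHomCode (F f).1 (F f).1 (F f).2 ∧ Function.Bijective (F f).2 ∧
        ∃ (π : ℕ → ℕ) (eG eH : ℕ) (inv : ℕ → ℕ),
          IsIdentityOf f eG ∧ IsIdentityOf (F f).1 eH ∧
          (∀ y, (F f).1 (y, inv y) = eH ∧ (F f).1 (inv y, y) = eH) ∧
          IsHomCode (F f).1 f π ∧ Function.Surjective π ∧
          ∀ x, π x = eG ↔ ∃ y, x = (F f).1 (y, inv ((F f).2 y)) := by
  let e := freeEquivNat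
  refine ⟨fun f => (transportCode e, e ∘ ⇑(1 + lower f) ∘ e.symm),
    measurable_const.prodMk (measurable_conj_one_add_lower e), fun f hf => ?_⟩
  have hα := (lower f).bijective_one_add_of_forall_exists_pow_apply_eq_zero
    (exists_lower_pow_apply_eq_zero f)
  -- `transportCode eG` is `f` by definition, so the lemmas on transported codes apply to `f`.
  let eG := CodedGroup.equivNat hf
  refine ⟨transportCode_mem_AGTFCode e,
    isHomCode_transportCode e e (1 + lower f).toAddMonoidHom,
    e.bijective.comp (hα.comp e.symm.bijective),
    eG ∘ proj hf ∘ e.symm, eG 0, e 0, fun a => e (-e.symm a),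
    isIdentityOf_transportCode eG, isIdentityOf_transportCode e, transportCode_neg e,
    isHomCode_transportCode e eG (proj hf).toAddMonoidHom,
    eG.surjective.comp ((proj_surjective hf).comp e.symm.surjective), fun x => ?_⟩
  rw [exists_eq_transportCode_iff_mem_range, ← ker_proj hf, LinearMap.mem_ker]
  exact eG.injective.eq_iff
end

section
/- For every tree T on ℕ, the group G_𝒫(T) is a torsion-free 𝒫-divisible abelian group. -/
/-- A tree on `ℕ`: a set of finite sequences containing the empty sequence and closed
under initial segments. -/
def IsTree (T : Set (List ℕ)) : Prop :=
  [] ∈ T ∧ ∀ v ∈ T, ∀ u, u <+: v → u ∈ T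

/-- The standard basis vector `e_v` of the direct sum `⊕_{v} ℚ`. -/
noncomputable def eVec (v : List ℕ) : List ℕ →₀ ℚ := Finsupp.single v 1

/-- The generating set of the group `G_𝒫(T)`: the elements `(1/(rᵃ · q_{|v|}ᵇ)) • e_v`
for `v ∈ T`, `r ∈ 𝒫`, `a b : ℕ`, together with the elements
`(1/(rᵃ · p_{|v|})) • (e_v + e_w)` for `v ∈ T` and `w ∈ T` an immediate successor of `v`,
`r ∈ 𝒫`, `a : ℕ`. -/
def treeGroupGens (P : Set ℕ) (p q : ℕ → ℕ) (T : Set (List ℕ)) : Set (List ℕ →₀ ℚ) :=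
  {x | ∃ v ∈ T, ∃ r ∈ P, ∃ a b : ℕ,
      x = (1 / ((r : ℚ) ^ a * (q v.length : ℚ) ^ b)) • eVec v} ∪
  {x | ∃ v ∈ T, ∃ w ∈ T, v <+: w ∧ w.length = v.length + 1 ∧ ∃ r ∈ P, ∃ a : ℕ,
      x = (1 / ((r : ℚ) ^ a * (p v.length : ℚ))) • (eVec v + eVec w)}

/-- The group `G_𝒫(T)`, as a subgroup of the direct sum `⊕_{v} ℚ` (it is contained in
the direct summand `⊕_{v ∈ T} ℚ` spanned by the basis vectors indexed by `T`). -/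
noncomputable def treeGroup (P : Set ℕ) (p q : ℕ → ℕ) (T : Set (List ℕ)) :
    AddSubgroup (List ℕ →₀ ℚ) :=
  AddSubgroup.closure (treeGroupGens P p q T)

/-! The group lives in a `ℚ`-vector space, so it is torsion-free, and it suffices to show that
`r⁻¹ • g ∈ G_𝒫(T)` for every `r ∈ 𝒫` and every generator `g`. The denominator of a generator is
`r'ᵃ · d` with `r' ∈ 𝒫` and `d` a power of some `q_n` or equal to some `p_n`, hence prime to `r`.
If `r = r'` then `r⁻¹ • g` is again a generator; otherwise `r` is prime to `r'ᵃ · d`, and a Bézout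
combination of `r⁻¹ • z` and `g = (r'ᵃ · d)⁻¹ • z` gives `(r · r'ᵃ · d)⁻¹ • z`. -/

section RationalModule

variable {M : Type*} [AddCommGroup M] [Module ℚ M]

theorem AddSubgroup.smul_mem_closure {S : Set M} (c : ℚ) (hS : ∀ g ∈ S, c • g ∈ closure S)
    {x : M} (hx : x ∈ closure S) : c • x ∈ closure S :=
  (closure_le (comap (DistribSMul.toAddMonoidHom M c) (closure S))).2 hS hx

theorem AddSubgroup.inv_mul_smul_mem_of_coprime (H : AddSubgroup M) {m n : ℕ}
    (hmn : m.Coprime n) {z : M} (hm : (m : ℚ)⁻¹ • z ∈ H) (hn : (n : ℚ)⁻¹ • z ∈ H) :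
    ((m : ℚ) * n)⁻¹ • z ∈ H := by
  obtain rfl | hm0 := eq_or_ne m 0
  · simp
  obtain rfl | hn0 := eq_or_ne n 0
  · simp
  obtain ⟨u, v, huv⟩ := hmn.isCoprime
  have hcoeff : ((m : ℚ) * n)⁻¹ = u * (n : ℚ)⁻¹ + v * (m : ℚ)⁻¹ := by
    have huv' : (u : ℚ) * m + v * n = 1 := by exact_mod_cast huv
    field_simp
    linear_combination -huv'
  rw [hcoeff, add_smul, mul_smul, mul_smul, Int.cast_smul_eq_zsmul, Int.cast_smul_eq_zsmul]
  exact H.add_mem (H.zsmul_mem hn u) (H.zsmul_mem hm v)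

theorem AddSubgroup.inv_smul_inv_pow_mul_smul_mem {P : Set ℕ} (hP : ∀ r ∈ P, r.Prime)
    (H : AddSubgroup M) {d : ℕ} (hd : ∀ r ∈ P, ¬ r ∣ d) {z : M}
    (hz : ∀ r ∈ P, (r : ℚ)⁻¹ • z ∈ H) (hzd : ∀ r ∈ P, ∀ a : ℕ, ((r : ℚ) ^ a * d)⁻¹ • z ∈ H)
    {r r' : ℕ} (hr : r ∈ P) (hr' : r' ∈ P) (a : ℕ) :
    (r : ℚ)⁻¹ • ((r' : ℚ) ^ a * d)⁻¹ • z ∈ H := by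
  rw [smul_smul, ← mul_inv]
  obtain rfl | hne := eq_or_ne r r'
  · rw [← mul_assoc, ← pow_succ']
    exact hzd r hr (a + 1)
  · have hcop : r.Coprime (r' ^ a * d) :=
      ((Nat.coprime_primes (hP r hr) (hP r' hr')).2 hne).pow_right a |>.mul_right
        ((Nat.Prime.coprime_iff_not_dvd (hP r hr)).2 (hd r hr))
    simpa using H.inv_mul_smul_mem_of_coprime hcop (hz r hr) (by simpa using hzd r' hr' a)

end RationalModule

section TreeGroup

variable {P : Set ℕ} {p q : ℕ → ℕ} {T : Set (List ℕ)}

theorem inv_pow_mul_smul_eVec_mem_treeGroup {v : List ℕ} (hv : v ∈ T) {r : ℕ} (hr : r ∈ P)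
    (a b : ℕ) : ((r : ℚ) ^ a * (q v.length : ℚ) ^ b)⁻¹ • eVec v ∈ treeGroup P p q T :=
  AddSubgroup.subset_closure (Or.inl ⟨v, hv, r, hr, a, b, by rw [one_div]⟩)

theorem inv_smul_eVec_mem_treeGroup {v : List ℕ} (hv : v ∈ T) {r : ℕ} (hr : r ∈ P) :
    (r : ℚ)⁻¹ • eVec v ∈ treeGroup P p q T := by
  simpa using inv_pow_mul_smul_eVec_mem_treeGroup (p := p) (q := q) hv hr 1 0

theorem inv_pow_mul_smul_edge_mem_treeGroup {v w : List ℕ} (hv : v ∈ T) (hw : w ∈ T)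
    (hvw : v <+: w) (hlen : w.length = v.length + 1) {r : ℕ} (hr : r ∈ P) (a : ℕ) :
    ((r : ℚ) ^ a * (p v.length : ℚ))⁻¹ • (eVec v + eVec w) ∈ treeGroup P p q T :=
  AddSubgroup.subset_closure (Or.inr ⟨v, hv, w, hw, hvw, hlen, r, hr, a, by rw [one_div]⟩)

theorem inv_smul_mem_treeGroup_of_mem_gens (hP : ∀ r ∈ P, r.Prime) (hp : ∀ n, (p n).Prime)
    (hq : ∀ n, (q n).Prime) (hpP : ∀ n, p n ∉ P) (hqP : ∀ n, q n ∉ P) {r : ℕ} (hr : r ∈ P)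
    {g : List ℕ →₀ ℚ} (hg : g ∈ treeGroupGens P p q T) : (r : ℚ)⁻¹ • g ∈ treeGroup P p q T := by
  have not_dvd {s : ℕ} (hs : s.Prime) (hsP : s ∉ P) (b : ℕ) : ∀ r ∈ P, ¬ r ∣ s ^ b :=
    fun r hr hdvd => hsP <| (Nat.prime_dvd_prime_iff_eq (hP r hr) hs).1
      ((hP r hr).dvd_of_dvd_pow hdvd) ▸ hr
  rcases hg with ⟨v, hv, r', hr', a, b, rfl⟩ | ⟨v, hv, w, hw, hvw, hlen, r', hr', a, rfl⟩
  · rw [one_div]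
    simpa using (treeGroup P p q T).inv_smul_inv_pow_mul_smul_mem hP (d := q v.length ^ b)
      (not_dvd (hq _) (hqP _) b) (fun s hs => inv_smul_eVec_mem_treeGroup hv hs)
      (fun s hs a => by simpa using inv_pow_mul_smul_eVec_mem_treeGroup hv hs a b) hr hr' a
  · rw [one_div]
    refine (treeGroup P p q T).inv_smul_inv_pow_mul_smul_mem hP
      (by simpa using not_dvd (hp v.length) (hpP _) 1) (fun s hs => ?_)
      (fun s hs a => inv_pow_mul_smul_edge_mem_treeGroup hv hw hvw hlen hs a) hr hr' a
    rw [smul_add]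
    exact add_mem (inv_smul_eVec_mem_treeGroup hv hs) (inv_smul_eVec_mem_treeGroup hw hs)

end TreeGroup

theorem stmt6_general (P : Set ℕ) (hP : ∀ r ∈ P, Nat.Prime r)
    (p q : ℕ → ℕ) (hp : ∀ n, Nat.Prime (p n)) (hq : ∀ n, Nat.Prime (q n))
    (hpP : ∀ n, p n ∉ P) (hqP : ∀ n, q n ∉ P)
    (T : Set (List ℕ)) :
    (∀ x ∈ treeGroup P p q T, ∀ n : ℕ, 1 ≤ n → n • x = 0 → x = 0) ∧
      (∀ r ∈ P, ∀ x ∈ treeGroup P p q T, ∃ y ∈ treeGroup P p q T, x = r • y) := by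
  refine ⟨fun x _ n hn hnx => (smul_eq_zero.mp hnx).resolve_left (by omega), ?_⟩
  intro r hr x hx
  have hr0 : (r : ℚ) ≠ 0 := by exact_mod_cast (hP r hr).ne_zero
  refine ⟨(r : ℚ)⁻¹ • x, AddSubgroup.smul_mem_closure _
    (fun g hg => inv_smul_mem_treeGroup_of_mem_gens hP hp hq hpP hqP hr hg) hx, ?_⟩
  rw [← Nat.cast_smul_eq_nsmul ℚ, smul_inv_smul₀ hr0]

/-- For every tree `T` on `ℕ`, the group `G_𝒫(T)` is a torsion-free
`𝒫`-divisible abelian group. -/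
theorem stmt6 (P : Set ℕ) (hP : ∀ r ∈ P, Nat.Prime r)
    (hPco : {r | Nat.Prime r ∧ r ∉ P}.Infinite)
    (p q : ℕ → ℕ) (hp : ∀ n, Nat.Prime (p n)) (hq : ∀ n, Nat.Prime (q n))
    (hpinj : Function.Injective p) (hqinj : Function.Injective q)
    (hpq : ∀ m n, p m ≠ q n)
    (hpP : ∀ n, p n ∉ P) (hqP : ∀ n, q n ∉ P)
    (T : Set (List ℕ)) (hT : IsTree T) :
    (∀ x ∈ treeGroup P p q T, ∀ n : ℕ, 1 ≤ n → n • x = 0 → x = 0) ∧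
      (∀ r ∈ P, ∀ x ∈ treeGroup P p q T, ∃ y ∈ treeGroup P p q T, x = r • y) :=
  stmt6_general P hP p q hp hq hpP hqP T
end
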